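/- arXiv:2209.02311 — 7 statements merged into one kernel-verified Lean document; each statement's English description precedes it below -/
import Mathlib

section
/- If G is a connected graph and S is a metric basis of G containing a vertex v that is a basis forced vertex (i.e., v belongs to every metric basis of G), and H is the graph obtained from G by attaching a new pendant vertex u to v, then dim(H) = dim(G). -/
open SimpleGraph

def isResolving {V : Type*} (G : SimpleGraph V) (S : Set V) : Prop :=
  ∀ x y : V, x ≠ y → ∃ s ∈ S, G.dist s x ≠ G.dist s y

noncomputable def metricDim {V : Type*} (G : SimpleGraph V) : ℕ :=
  sInf {n | ∃ S : Set V, isResolving G S ∧ S.ncard = n}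

def isMetricBasis {V : Type*} (G : SimpleGraph V) (S : Set V) : Prop :=
  isResolving G S ∧ S.ncard = metricDim G

def isBasisForced {V : Type*} (G : SimpleGraph V) (v : V) : Prop :=
  ∀ S : Set V, isMetricBasis G S → v ∈ S

def attachPendant {V : Type*} (G : SimpleGraph V) (v : V) : SimpleGraph (Option V) :=
  SimpleGraph.fromRel (fun x y =>
    (∃ a b, x = some a ∧ y = some b ∧ G.Adj a b) ∨ (x = some v ∧ y = none))

/-!
In `H = attachPendant G v` the old vertices keep their mutual distances, and the distance from
the new leaf `u = none` to any old vertex is one more than the distance from `v`. Hence a resolving set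
of `G` containing `v` stays resolving in `H` after `v` is replaced by `u`, so `dim H ≤ dim G`;
conversely, projecting `u ↦ v` turns any resolving set of `H` into one of `G` that is no larger.
-/

namespace SimpleGraph

variable {V W : Type*} {G : SimpleGraph V} {G' : SimpleGraph W}

lemma Walk.exists_walk_length_le_of_adj_imp (f : V → W)
    (hf : ∀ ⦃x y⦄, G.Adj x y → f x = f y ∨ G'.Adj (f x) (f y)) {x y : V} (p : G.Walk x y) :
    ∃ q : G'.Walk (f x) (f y), q.length ≤ p.length := by
  induction p with
  | nil => exact ⟨.nil, le_rfl⟩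
  | cons h _ ih =>
    obtain ⟨q, hq⟩ := ih
    rcases hf h with heq | hadj
    · exact ⟨q.copy heq.symm rfl, by simp only [Walk.length_copy, Walk.length_cons]; omega⟩
    · exact ⟨.cons hadj q, by simpa using hq⟩

lemma Reachable.dist_le_of_adj_imp (f : V → W)
    (hf : ∀ ⦃x y⦄, G.Adj x y → f x = f y ∨ G'.Adj (f x) (f y)) {x y : V} (hxy : G.Reachable x y) :
    G'.dist (f x) (f y) ≤ G.dist x y := by
  obtain ⟨p, hp⟩ := hxy.exists_walk_length_eq_dist
  obtain ⟨q, hq⟩ := p.exists_walk_length_le_of_adj_imp f hf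
  exact (dist_le q).trans (hp ▸ hq)

lemma Connected.dist_self_ne (hG : G.Connected) {x y : V} (hxy : x ≠ y) :
    G.dist x x ≠ G.dist x y := by
  rw [dist_self, ne_comm, Ne, hG.dist_eq_zero_iff]
  exact hxy

end SimpleGraph

lemma Set.ncard_image_getD_le {α : Type*} (T : Set (Option α)) (a : α) :
    ((Option.getD · a) '' T).ncard ≤ T.ncard := by
  by_cases hT : T.Finite
  · exact Set.ncard_image_le hT
  -- `ncard` vanishes on infinite sets, and the image stays infinite as `getD` has finite fibres.
  have hfib (b : α) : ((Option.getD · a) ⁻¹' {b}).Finite :=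
    (Set.toFinite {some b, none}).subset fun t ht => by cases t <;> simp_all
  have hinf : ((Option.getD · a) '' T).Infinite := fun h =>
    hT ((h.preimage' fun b _ => hfib b).subset (Set.subset_preimage_image _ _))
  simp [hinf.ncard]

section MetricDim

variable {V : Type*} {G : SimpleGraph V}

lemma isResolving_univ (hG : G.Connected) : isResolving G Set.univ :=
  fun _ _ hxy => ⟨_, Set.mem_univ _, hG.dist_self_ne hxy⟩

lemma metricDim_le_ncard {S : Set V} (hS : isResolving G S) : metricDim G ≤ S.ncard :=
  Nat.sInf_le ⟨S, hS, rfl⟩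

lemma exists_isMetricBasis (hG : G.Connected) : ∃ B, isMetricBasis G B :=
  Nat.sInf_mem (s := {n | ∃ S : Set V, isResolving G S ∧ S.ncard = n})
    ⟨_, _, isResolving_univ hG, rfl⟩

end MetricDim

section AttachPendant

variable {V : Type*} {G : SimpleGraph V} {v : V}

@[simp]
lemma attachPendant_adj_some_some {a b : V} :
    (attachPendant G v).Adj (some a) (some b) ↔ G.Adj a b := by
  simpa [attachPendant, G.adj_comm b a] using fun h : G.Adj a b => h.ne

@[simp]
lemma attachPendant_adj_none_left {w : Option V} :
    (attachPendant G v).Adj none w ↔ w = some v := by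
  simp only [attachPendant, fromRel_adj]
  aesop

@[simp]
lemma attachPendant_adj_none_right {w : Option V} :
    (attachPendant G v).Adj w none ↔ w = some v := by
  rw [adj_comm, attachPendant_adj_none_left]

lemma attachPendant_adj_none_some : (attachPendant G v).Adj none (some v) :=
  attachPendant_adj_none_left.mpr rfl

@[simps]
def attachPendantSomeHom (G : SimpleGraph V) (v : V) : G →g attachPendant G v :=
  ⟨some, attachPendant_adj_some_some.mpr⟩

lemma attachPendant_adj_imp_getD {x y : Option V} (h : (attachPendant G v).Adj x y) :
    x.getD v = y.getD v ∨ G.Adj (x.getD v) (y.getD v) := by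
  rcases x with _ | a <;> rcases y with _ | b <;> simp_all

lemma attachPendant_connected (hG : G.Connected) : (attachPendant G v).Connected := by
  have hsome (a b : V) : (attachPendant G v).Reachable (some a) (some b) :=
    (hG a b).map (attachPendantSomeHom G v)
  have hnone (a : V) : (attachPendant G v).Reachable none (some a) :=
    attachPendant_adj_none_some.reachable.trans (hsome v a)
  refine (connected_iff _).mpr ⟨?_, ⟨none⟩⟩
  rintro (_ | a) (_ | b)
  exacts [.rfl, hnone b, (hnone a).symm, hsome a b]

lemma attachPendant_dist_some_some (hG : G.Connected) (a b : V) :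
    (attachPendant G v).dist (some a) (some b) = G.dist a b := by
  refine le_antisymm ?_ ?_
  · obtain ⟨p, hp⟩ := (hG a b).exists_walk_length_eq_dist
    simpa [hp] using dist_le (p.map (attachPendantSomeHom G v))
  · exact (attachPendant_connected hG (some a) (some b)).dist_le_of_adj_imp (·.getD v)
      fun _ _ => attachPendant_adj_imp_getD

lemma attachPendant_dist_none_some (hG : G.Connected) (a : V) :
    (attachPendant G v).dist none (some a) = G.dist v a + 1 := by
  refine le_antisymm ?_ ?_
  · calc _ ≤ (attachPendant G v).dist none (some v) + (attachPendant G v).dist (some v) (some a) :=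
          (attachPendant_connected hG).dist_triangle
      _ = G.dist v a + 1 := by
          rw [dist_eq_one_iff_adj.mpr attachPendant_adj_none_some,
            attachPendant_dist_some_some hG, add_comm]
  · obtain ⟨p, hp⟩ := (attachPendant_connected hG none (some a)).exists_walk_length_eq_dist
    cases p with
    | cons h p =>
      obtain rfl : _ = some v := attachPendant_adj_none_left.mp h
      have := dist_le p
      rw [attachPendant_dist_some_some hG] at this
      simp only [Walk.length_cons] at hp
      omega

lemma attachPendant_dist_eq_iff (hG : G.Connected) (t : Option V) (a b : V) :
    (attachPendant G v).dist t (some a) = (attachPendant G v).dist t (some b) ↔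
      G.dist (t.getD v) a = G.dist (t.getD v) b := by
  rcases t with _ | s
  · simp [attachPendant_dist_none_some hG]
  · simp [attachPendant_dist_some_some hG]

open Classical in
noncomputable def replaceByPendant (v a : V) : Option V :=
  if a = v then none else some a

@[simp]
lemma getD_replaceByPendant (a : V) : (replaceByPendant v a).getD v = a := by
  by_cases h : a = v <;> simp [replaceByPendant, h]

lemma replaceByPendant_injective : Function.Injective (replaceByPendant v) :=
  Function.LeftInverse.injective (g := (Option.getD · v)) getD_replaceByPendant

lemma isResolving_attachPendant_image (hG : G.Connected) {S : Set V} (hS : isResolving G S)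
    (hvS : v ∈ S) : isResolving (attachPendant G v) (replaceByPendant v '' S) := by
  have hnone : none ∈ replaceByPendant v '' S := ⟨v, hvS, by simp [replaceByPendant]⟩
  have hconn := attachPendant_connected (v := v) hG
  rintro (_ | a) (_ | b) hxy
  · exact absurd rfl hxy
  · exact ⟨none, hnone, hconn.dist_self_ne hxy⟩
  · exact ⟨none, hnone, (hconn.dist_self_ne hxy.symm).symm⟩
  · obtain ⟨s, hs, hd⟩ := hS a b (Option.some_injective _ |>.ne_iff.mp hxy)
    refine ⟨replaceByPendant v s, Set.mem_image_of_mem _ hs, ?_⟩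
    rwa [Ne, attachPendant_dist_eq_iff hG, getD_replaceByPendant]

lemma isResolving_image_getD (hG : G.Connected) {T : Set (Option V)}
    (hT : isResolving (attachPendant G v) T) : isResolving G ((Option.getD · v) '' T) := by
  intro a b hab
  obtain ⟨t, ht, hd⟩ := hT (some a) (some b) (by simpa using hab)
  exact ⟨t.getD v, Set.mem_image_of_mem _ ht, (attachPendant_dist_eq_iff hG t a b).not.mp hd⟩

lemma metricDim_attachPendant_le (hG : G.Connected) {S : Set V} (hS : isResolving G S)
    (hvS : v ∈ S) : metricDim (attachPendant G v) ≤ S.ncard := by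
  simpa [Set.ncard_image_of_injective _ replaceByPendant_injective] using
    metricDim_le_ncard (isResolving_attachPendant_image hG hS hvS)

lemma metricDim_le_metricDim_attachPendant (hG : G.Connected) :
    metricDim G ≤ metricDim (attachPendant G v) := by
  obtain ⟨T, hT, hTcard⟩ := exists_isMetricBasis (attachPendant_connected (v := v) hG)
  calc metricDim G ≤ ((Option.getD · v) '' T).ncard :=
        metricDim_le_ncard (isResolving_image_getD hG hT)
    _ ≤ T.ncard := T.ncard_image_getD_le v
    _ = metricDim (attachPendant G v) := hTcard

end AttachPendant

theorem stmt0_general {V : Type*} (G : SimpleGraph V) (hG : G.Connected)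
    (v : V)
    (S : Set V) (hS : isMetricBasis G S) (hvS : v ∈ S) :
    metricDim (attachPendant G v) = metricDim G :=
  le_antisymm (hS.2 ▸ metricDim_attachPendant_le hG hS.1 hvS)
    (metricDim_le_metricDim_attachPendant hG)

theorem stmt0 {V : Type*} [Fintype V] (G : SimpleGraph V) (hG : G.Connected)
    (v : V) (hv : isBasisForced G v)
    (S : Set V) (hS : isMetricBasis G S) (hvS : v ∈ S) :
    metricDim (attachPendant G v) = metricDim G :=
  stmt0_general G hG v S hS hvS
end

section
/- Let G be a connected graph with a basis forced vertex v, let H be obtained from G by attaching a pendant u to v, and let R be any metric basis of G. If R is not a resolving set of H, then the set (R \ {v}) ∪ {u} is a resolving set of H. -/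
open SimpleGraph

/-!
Distances between vertices of `G` are the same in `H = attachPendant G v`, and the pendant
vertex `u = none` lies at distance `d(v, x) + 1` from every `x ∈ V`. Hence `u` separates every
pair that `v` separates, and it separates itself from every other vertex, so replacing `v` by `u`
in any resolving set of `G` gives a resolving set of `H`.
-/

namespace attachPendant

variable {V : Type*} (G : SimpleGraph V) (v : V)

@[simp]
lemma adj_some_some {a b : V} : (attachPendant G v).Adj (some a) (some b) ↔ G.Adj a b := by
  simpa [attachPendant, G.adj_comm b a] using fun h : G.Adj a b => h.ne

@[simp]
lemma adj_none_left {z : Option V} : (attachPendant G v).Adj none z ↔ z = some v := by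
  cases z <;> simp [attachPendant]

lemma adj_none_some : (attachPendant G v).Adj none (some v) :=
  (adj_none_left G v).2 rfl

def ofGraph : G →g attachPendant G v where
  toFun := some
  map_rel' := (adj_some_some G v).2

/-- Collapsing the pendant vertex onto `v` turns each edge of `H` into an edge or a loop of `G`. -/
lemma getD_eq_or_adj_getD {x y : Option V} (h : (attachPendant G v).Adj x y) :
    x.getD v = y.getD v ∨ G.Adj (x.getD v) (y.getD v) := by
  rcases x with _ | a <;> rcases y with _ | b
  · exact absurd rfl h.ne
  · simp_all
  · simp_all [(attachPendant G v).adj_comm (some a) none]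
  · exact Or.inr ((adj_some_some G v).1 h)

lemma exists_walk_getD_length_le {x y : Option V} (w : (attachPendant G v).Walk x y) :
    ∃ p : G.Walk (x.getD v) (y.getD v), p.length ≤ w.length := by
  induction w with
  | nil => exact ⟨Walk.nil, le_rfl⟩
  | cons h _ ih =>
    obtain ⟨p, hp⟩ := ih
    rcases getD_eq_or_adj_getD G v h with heq | hadj
    · exact ⟨p.copy heq.symm rfl, by rw [Walk.length_copy, Walk.length_cons]; omega⟩
    · exact ⟨Walk.cons hadj p, by simpa using hp⟩

variable {G}

lemma dist_some_some (hG : G.Connected) (a b : V) :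
    (attachPendant G v).dist (some a) (some b) = G.dist a b := by
  obtain ⟨p, hp⟩ := (hG.preconnected a b).exists_walk_length_eq_dist
  apply le_antisymm
  · have h := dist_le (p.map (ofGraph G v))
    rw [Walk.length_map, hp] at h
    exact h
  · obtain ⟨w, hw⟩ := ((hG.preconnected a b).map (ofGraph G v)).exists_walk_length_eq_dist
    obtain ⟨q, hq⟩ := exists_walk_getD_length_le G v w
    exact (dist_le q).trans (hq.trans hw.le)

lemma dist_none_some (hG : G.Connected) (a : V) :
    (attachPendant G v).dist none (some a) = G.dist v a + 1 := by
  have hu := adj_none_some G v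
  apply le_antisymm
  · calc (attachPendant G v).dist none (some a)
        ≤ (attachPendant G v).dist none (some v) + (attachPendant G v).dist (some v) (some a) :=
          hu.reachable.dist_triangle_left _
      _ = G.dist v a + 1 := by rw [dist_eq_one_iff_adj.2 hu, dist_some_some v hG, add_comm]
  · have hr : (attachPendant G v).Reachable none (some a) :=
      hu.reachable.trans ((hG.preconnected v a).map (ofGraph G v))
    obtain ⟨w, hw⟩ := hr.exists_walk_length_eq_dist
    cases w with
    | cons h q =>
      obtain rfl := (adj_none_left G v).1 h
      rw [← hw, Walk.length_cons, ← dist_some_some v hG]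
      exact Nat.add_le_add_right (dist_le q) 1

theorem isResolving_insert_none (hG : G.Connected) {R : Set V} (hR : isResolving G R) :
    isResolving (attachPendant G v) (insert none (some '' (R \ {v}))) := by
  rintro (_ | a) (_ | b) hab
  · exact absurd rfl hab
  · exact ⟨none, Set.mem_insert _ _, by simp [dist_none_some v hG]⟩
  · exact ⟨none, Set.mem_insert _ _, by simp [dist_none_some v hG]⟩
  · obtain ⟨s, hsR, hs⟩ := hR a b fun h => hab (congrArg some h)
    by_cases hsv : s = v
    · subst hsv
      exact ⟨none, Set.mem_insert _ _, by simpa [dist_none_some s hG] using hs⟩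
    · exact ⟨some s, Set.mem_insert_of_mem _ ⟨s, ⟨hsR, hsv⟩, rfl⟩,
        by simpa [dist_some_some v hG] using hs⟩

end attachPendant

theorem stmt2_general {V : Type*} (G : SimpleGraph V) (hG : G.Connected)
    (v : V)
    (R : Set V) (hR : isMetricBasis G R) :
    isResolving (attachPendant G v) (insert (none : Option V) (some '' (R \ {v}))) :=
  attachPendant.isResolving_insert_none v hG hR.1

theorem stmt2 {V : Type*} [Fintype V] (G : SimpleGraph V) (hG : G.Connected)
    (v : V) (hv : isBasisForced G v)
    (R : Set V) (hR : isMetricBasis G R)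
    (hnot : ¬ isResolving (attachPendant G v) (some '' R)) :
    isResolving (attachPendant G v) (insert (none : Option V) (some '' (R \ {v}))) :=
  stmt2_general G hG v R hR
end

section
/- In a connected graph G, a cut vertex is not mutually maximally distant with any other vertex of G. -/
open SimpleGraph

def maxDistantFrom {V : Type*} (G : SimpleGraph V) (u v : V) : Prop :=
  ∀ w : V, G.Adj u w → G.dist v w ≤ G.dist v u

def mmd {V : Type*} (G : SimpleGraph V) (u v : V) : Prop :=
  maxDistantFrom G u v ∧ maxDistantFrom G v u

lemma reach_induce_aux {V : Type*} (G : SimpleGraph V) (v : V) {a b : V}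
    (p : G.Walk a b) (hp : v ∉ p.support) (ha : a ≠ v) (hb : b ≠ v) :
    (G.induce {w : V | w ≠ v}).Reachable ⟨a, ha⟩ ⟨b, hb⟩ := by
  induction p with
  | nil => exact Reachable.refl _
  | @cons a c b h q ih =>
    rw [Walk.support_cons] at hp
    have hq : v ∉ q.support := fun hx => hp (List.mem_cons_of_mem _ hx)
    have hc : c ≠ v := fun he => hq (he ▸ q.start_mem_support)
    have hadj : (G.induce {w : V | w ≠ v}).Adj ⟨a, ha⟩ ⟨c, hc⟩ := by
      simpa using h
    exact hadj.reachable.trans (ih hq hc hb)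

lemma dist_split_aux {V : Type*} (G : SimpleGraph V) {a b v : V}
    (p : G.Walk a b) (hv : v ∈ p.support) :
    G.dist a v + G.dist v b ≤ p.length := by
  classical
  calc G.dist a v + G.dist v b
      ≤ (p.takeUntil v hv).length + (p.dropUntil v hv).length :=
        Nat.add_le_add (SimpleGraph.dist_le _) (SimpleGraph.dist_le _)
    _ = p.length := by rw [← Walk.length_append, Walk.take_spec]

theorem stmt9 {V : Type*} [Fintype V] (G : SimpleGraph V) (hG : G.Connected)
    (v : V) (hcut : ¬ (G.induce {w : V | w ≠ v}).Connected) :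
    ∀ u : V, u ≠ v → ¬ mmd G v u := by
  classical
  intro u hu hmmd
  set G' := G.induce {w : V | w ≠ v} with hG'
  -- find x not reachable from u in G'
  have hx : ∃ x : {w : V | w ≠ v}, ¬ G'.Reachable ⟨u, hu⟩ x := by
    by_contra hno
    push_neg at hno
    haveI : Nonempty {w : V | w ≠ v} := ⟨⟨u, hu⟩⟩
    exact hcut ⟨fun a b => (hno a).symm.trans (hno b)⟩
  obtain ⟨⟨x, hxv⟩, hx⟩ := hx
  -- a path from u to x in G
  obtain ⟨w0⟩ := hG.exists_walk_length_eq_dist u x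
  have p := w0.toPath
  obtain ⟨p, hp⟩ : ∃ p : G.Walk u x, p.IsPath := ⟨w0.bypass, w0.bypass_isPath⟩
  have hvp : v ∈ p.support := by
    by_contra hvp
    exact hx (reach_induce_aux G v p hvp hu hxv)
  -- the walk after v
  have hq : ∃ (w : V) (h : G.Adj v w) (q : G.Walk w x), v ∉ q.support := by
    have hdp : (p.dropUntil v hvp).IsPath := hp.dropUntil hvp
    obtain ⟨w, h, q, hdq⟩ := Walk.exists_eq_cons_of_ne (Ne.symm hxv) (p.dropUntil v hvp)
    refine ⟨w, h, q, ?_⟩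
    have := hdp.support_nodup
    rw [hdq, Walk.support_cons] at this
    exact (List.nodup_cons.mp this).1
  obtain ⟨w, hadj, q, hvq⟩ := hq
  have hwv : w ≠ v := fun he => G.irrefl (he ▸ hadj)
  -- w reachable to x in G', hence u not reachable to w in G'
  have hwx : G'.Reachable ⟨w, hwv⟩ ⟨x, hxv⟩ := reach_induce_aux G v q hvq hwv hxv
  have huw : ¬ G'.Reachable ⟨u, hu⟩ ⟨w, hwv⟩ := fun h => hx (h.trans hwx)
  -- dist u w ≥ dist u v + 1
  obtain ⟨r, hr⟩ := hG.exists_walk_length_eq_dist u w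
  have hvr : v ∈ r.support := by
    by_contra hvr
    exact huw (reach_induce_aux G v r hvr hu hwv)
  have h1 : G.dist u v + G.dist v w ≤ G.dist u w := hr ▸ dist_split_aux G r hvr
  have h2 : 0 < G.dist v w := hG.pos_dist_of_ne (Ne.symm hwv)
  have h3 : G.dist u w ≤ G.dist u v := hmmd.1 w hadj
  omega
end

section
/- For a connected graph G, a set S ⊆ V(G) is a strong resolving set of G if and only if S is a vertex cover of the strong resolving graph G_SR; consequently, the strong metric dimension of G equals the vertex cover number of G_SR. -/
open SimpleGraph

def srGraph {V : Type*} (G : SimpleGraph V) : SimpleGraph V where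
  Adj u v := u ≠ v ∧ mmd G u v
  symm := by
    constructor
    rintro u v ⟨h1, h2, h3⟩
    exact ⟨h1.symm, h3, h2⟩
  loopless := by
    constructor
    rintro u ⟨h1, -⟩
    exact h1 rfl

def stronglyResolves {V : Type*} (G : SimpleGraph V) (w u v : V) : Prop :=
  G.dist w u = G.dist w v + G.dist v u ∨ G.dist w v = G.dist w u + G.dist u v

def isStrongResolving {V : Type*} (G : SimpleGraph V) (S : Set V) : Prop :=
  ∀ u v : V, u ≠ v → ∃ w ∈ S, stronglyResolves G w u v

noncomputable def sMetricDim {V : Type*} (G : SimpleGraph V) : ℕ :=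
  sInf {n | ∃ S : Set V, isStrongResolving G S ∧ S.ncard = n}

def isStrongMetricBasis {V : Type*} (G : SimpleGraph V) (S : Set V) : Prop :=
  isStrongResolving G S ∧ S.ncard = sMetricDim G

def isVertexCover {V : Type*} (G : SimpleGraph V) (S : Set V) : Prop :=
  ∀ u v : V, G.Adj u v → u ∈ S ∨ v ∈ S

noncomputable def vcNum {V : Type*} (G : SimpleGraph V) : ℕ :=
  sInf {n | ∃ S : Set V, isVertexCover G S ∧ S.ncard = n}

/-! The two directions rest on one observation each. If `w` strongly resolves a mutually maximally
distant pair `u, v`, say with `v` on a geodesic from `w` to `u`, then `w = v`: otherwise a neighbour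
of `v` closer to `w` would be no closer to `u` than `v` is, shortening that geodesic. Conversely,
extending a geodesic from `v` through `u` as far as possible gives a vertex `u'` maximally distant
from `v`, and extending one from `u'` through `v` gives `v'`; then `u'`, `v'` are mutually maximally
distant and both strongly resolve `u, v`, so any vertex cover of `G_SR` resolves `u, v`. -/

namespace SimpleGraph

variable {V : Type*} {G : SimpleGraph V}

theorem Reachable.exists_adj_dist_lt {w v : V} (h : G.Reachable v w) (hne : v ≠ w) :
    ∃ v', G.Adj v v' ∧ G.dist w v' < G.dist w v := by
  obtain ⟨p, hp⟩ := h.exists_walk_length_eq_dist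
  cases p with
  | nil => exact absurd rfl hne
  | cons hadj q =>
    refine ⟨_, hadj, ?_⟩
    have := dist_le q
    rw [Walk.length_cons] at hp
    rw [dist_comm, dist_comm (u := w)]
    omega

end SimpleGraph

section

variable {V : Type*} {G : SimpleGraph V} {u v w : V}

theorem maxDistantFrom.eq_of_dist_eq_add (hG : G.Connected) (hv : maxDistantFrom G v u)
    (h : G.dist w u = G.dist w v + G.dist v u) : w = v := by
  by_contra hne
  obtain ⟨v', hadj, hcloser⟩ := (hG v w).exists_adj_dist_lt (Ne.symm hne)
  have hfar := hv v' hadj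
  have := hG.dist_triangle (u := w) (v := v') (w := u)
  rw [dist_comm (u := u), dist_comm (u := u)] at hfar
  omega

theorem mmd.eq_or_eq_of_stronglyResolves (hG : G.Connected) (hm : mmd G u v)
    (hw : stronglyResolves G w u v) : w = u ∨ w = v := by
  rcases hw with h | h
  · exact Or.inr (hm.2.eq_of_dist_eq_add hG h)
  · exact Or.inl (hm.1.eq_of_dist_eq_add hG h)

theorem maxDistantFrom.of_dist_eq_add (hG : G.Connected) (hu : maxDistantFrom G u v)
    (h : G.dist u w = G.dist u v + G.dist v w) : maxDistantFrom G u w := by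
  intro x hadj
  have := hu x hadj
  have := hG.dist_triangle (u := w) (v := v) (w := x)
  grind [SimpleGraph.dist_comm]

theorem exists_maxDistantFrom_dist_eq_add [Finite V] (hG : G.Connected) (v u : V) :
    ∃ u', maxDistantFrom G u' v ∧ G.dist v u' = G.dist v u + G.dist u u' := by
  obtain ⟨u', hu' : G.dist v u' = G.dist v u + G.dist u u', hmax⟩ :=
    Set.Finite.exists_maximalFor (G.dist v) {x | G.dist v x = G.dist v u + G.dist u x}
      (Set.toFinite _) ⟨u, by simp⟩
  refine ⟨u', fun x hadj => ?_, hu'⟩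
  by_contra! hfar
  have := hG.dist_triangle (u := v) (v := u') (w := x)
  have := hG.dist_triangle (u := v) (v := u) (w := x)
  have := hG.dist_triangle (u := u) (v := u') (w := x)
  have hx : G.dist v x = G.dist v u + G.dist u x := by grind [dist_eq_one_iff_adj]
  have := hmax hx hfar.le
  omega

theorem exists_srGraph_adj_stronglyResolves [Finite V] (hG : G.Connected) (huv : u ≠ v) :
    ∃ u' v', (srGraph G).Adj u' v' ∧ stronglyResolves G u' u v ∧ stronglyResolves G v' u v := by
  obtain ⟨u', hu', hvu'⟩ := exists_maxDistantFrom_dist_eq_add hG v u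
  obtain ⟨v', hv', hu'v'⟩ := exists_maxDistantFrom_dist_eq_add hG u' v
  have := hG.dist_triangle (u := u') (v := u) (w := v')
  have := hG.dist_triangle (u := u) (v := v) (w := v')
  have hu'_resolves : G.dist u' v = G.dist u' u + G.dist u v := by grind [SimpleGraph.dist_comm]
  have hv'_resolves : G.dist v' u = G.dist v' v + G.dist v u := by grind [SimpleGraph.dist_comm]
  have hne : u' ≠ v' := by
    rintro rfl
    have := hG.pos_dist_of_ne huv
    rw [SimpleGraph.dist_self] at hu'v'
    omega
  exact ⟨u', v', ⟨hne, hu'.of_dist_eq_add hG hu'v', hv'⟩, Or.inr hu'_resolves, Or.inl hv'_resolves⟩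

theorem isStrongResolving_iff_isVertexCover_srGraph [Finite V] (hG : G.Connected) (S : Set V) :
    isStrongResolving G S ↔ isVertexCover (srGraph G) S := by
  constructor
  · intro hS u v ⟨huv, hm⟩
    obtain ⟨w, hwS, hw⟩ := hS u v huv
    rcases hm.eq_or_eq_of_stronglyResolves hG hw with rfl | rfl
    exacts [Or.inl hwS, Or.inr hwS]
  · intro hS u v huv
    obtain ⟨u', v', hadj, hu', hv'⟩ := exists_srGraph_adj_stronglyResolves hG huv
    rcases hS u' v' hadj with h | h
    exacts [⟨u', h, hu'⟩, ⟨v', h, hv'⟩]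

end

theorem stmt10 {V : Type*} [Fintype V] (G : SimpleGraph V) (hG : G.Connected) :
    (∀ S : Set V, isStrongResolving G S ↔ isVertexCover (srGraph G) S) ∧
    sMetricDim G = vcNum (srGraph G) := by
  have key := isStrongResolving_iff_isVertexCover_srGraph hG
  exact ⟨key, by simp only [sMetricDim, vcNum, key]⟩
end

section
/- In an odd cycle C_{2m+1} (m ≥ 1), two distinct vertices are mutually maximally distant if and only if they are at distance m; hence the strong resolving graph of C_{2m+1} is isomorphic to the cycle C_{2m+1}. -/
open SimpleGraph

/-!
On `ZMod n`, `x ↦ |x.valMinAbs|` is a norm (subadditive, invariant under negation, `≤ n / 2`)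
with `|1| ≤ 1`, so the distance in the cycle `circulantGraph {1}` is `|(v - u).valMinAbs|`.
For `n = 2m + 1` every distance is at most `m`, so pairs at distance `m` are mutually maximally
distant; below `m`, one of the two neighbours `u ± 1` of `u` is farther from `v`. Hence the strong
resolving graph is the circulant graph with jump `m`, and since `m` is a unit modulo `2m + 1`,
multiplication by `m` carries the jump `1` to `m`.
-/

namespace ZMod

variable {n : ℕ}

lemma natAbs_valMinAbs_intCast_le (z : ℤ) : (z : ZMod n).valMinAbs.natAbs ≤ z.natAbs := by
  rcases n with _ | n
  · rfl
  · exact natAbs_min_of_le_div_two _ _ _ (coe_valMinAbs _) (natAbs_valMinAbs_le _)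

lemma natAbs_valMinAbs_one_le : (1 : ZMod n).valMinAbs.natAbs ≤ 1 := by
  simpa using natAbs_valMinAbs_intCast_le (n := n) 1

lemma natAbs_valMinAbs_eq_iff {x : ZMod n} {k : ℕ} (hk : k ≤ n / 2) :
    x.valMinAbs.natAbs = k ↔ x = k ∨ x = -k := by
  constructor
  · intro hx
    rw [← coe_valMinAbs x]
    rcases Int.natAbs_eq x.valMinAbs with h | h <;> rw [h, hx] <;> simp
  · rintro (rfl | rfl)
    · rw [valMinAbs_natCast_of_le_half hk, Int.natAbs_natCast]
    · rw [natAbs_valMinAbs_neg, valMinAbs_natCast_of_le_half hk, Int.natAbs_natCast]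

lemma natAbs_valMinAbs_add_one_or_sub_one {x : ZMod n} (hx : x.valMinAbs.natAbs < n / 2) :
    (x + 1).valMinAbs.natAbs = x.valMinAbs.natAbs + 1 ∨
      (x - 1).valMinAbs.natAbs = x.valMinAbs.natAbs + 1 := by
  set k := x.valMinAbs.natAbs
  simp only [natAbs_valMinAbs_eq_iff (show k + 1 ≤ n / 2 by omega)]
  rcases (natAbs_valMinAbs_eq_iff hx.le).1 rfl with hx' | hx' <;> rw [hx']
  · left; left; push_cast; rfl
  · right; right; push_cast; ring

end ZMod

namespace SimpleGraph

variable {n : ℕ}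

lemma exists_walk_circulantGraph_one_add_natCast (u : ZMod n) (k : ℕ) :
    ∃ p : (circulantGraph ({1} : Set (ZMod n))).Walk u (u + k), p.length ≤ k := by
  induction k with
  | zero => exact ⟨Walk.nil.copy rfl (by simp), by simp⟩
  | succ k ih =>
    obtain ⟨p, hp⟩ := ih
    have hk : u + (k + 1 : ℕ) = u + k + 1 := by push_cast; ring
    by_cases hloop : u + k = u + k + 1
    · exact ⟨p.copy rfl (hk.trans hloop.symm).symm, by rw [Walk.length_copy]; omega⟩
    · have hadj : (circulantGraph ({1} : Set (ZMod n))).Adj (u + k) (u + k + 1) := by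
        simp [hloop]
      exact ⟨(p.concat hadj).copy rfl hk.symm, by
        rw [Walk.length_copy, Walk.length_concat]; omega⟩

lemma exists_walk_circulantGraph_one_length_le (u v : ZMod n) :
    ∃ p : (circulantGraph ({1} : Set (ZMod n))).Walk u v,
      p.length ≤ (v - u).valMinAbs.natAbs := by
  obtain ⟨k, hk | hk⟩ := Int.eq_nat_or_neg (v - u).valMinAbs
  · have hv : v = u + k := by
      rw [← sub_add_cancel v u, ← ZMod.coe_valMinAbs (v - u), hk]; push_cast; ring
    obtain ⟨p, hp⟩ := exists_walk_circulantGraph_one_add_natCast u k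
    exact ⟨p.copy rfl hv.symm, by simpa [hk] using hp⟩
  · have hu : u = v + k := by
      rw [← sub_add_cancel u v, ← neg_sub, ← ZMod.coe_valMinAbs (v - u), hk]; push_cast; ring
    obtain ⟨p, hp⟩ := exists_walk_circulantGraph_one_add_natCast v k
    exact ⟨(p.copy rfl hu.symm).reverse, by simpa [hk] using hp⟩

lemma natAbs_valMinAbs_sub_le_length {u v : ZMod n}
    (p : (circulantGraph ({1} : Set (ZMod n))).Walk u v) :
    (v - u).valMinAbs.natAbs ≤ p.length := by
  induction p with
  | nil => simp
  | @cons u w v huw p ih =>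
    have hstep : (w - u).valMinAbs.natAbs ≤ 1 := by
      simp only [circulantGraph_adj, Set.mem_singleton_iff] at huw
      rcases huw.2 with h | h
      · rw [← neg_sub, ZMod.natAbs_valMinAbs_neg, h]
        exact ZMod.natAbs_valMinAbs_one_le
      · rw [h]
        exact ZMod.natAbs_valMinAbs_one_le
    calc (v - u).valMinAbs.natAbs = ((v - w) + (w - u)).valMinAbs.natAbs := by
          rw [sub_add_sub_cancel]
      _ ≤ (v - w).valMinAbs.natAbs + (w - u).valMinAbs.natAbs :=
          (ZMod.natAbs_valMinAbs_add_le _ _).trans (Int.natAbs_add_le _ _)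
      _ ≤ p.length + 1 := add_le_add ih hstep
      _ = (Walk.cons huw p).length := (Walk.length_cons huw p).symm

theorem circulantGraph_one_dist (u v : ZMod n) :
    (circulantGraph ({1} : Set (ZMod n))).dist u v = (v - u).valMinAbs.natAbs := by
  obtain ⟨p, hp⟩ := exists_walk_circulantGraph_one_length_le u v
  obtain ⟨q, hq⟩ := Reachable.exists_walk_length_eq_dist ⟨p⟩
  exact (dist_le p |>.trans hp).antisymm (hq ▸ natAbs_valMinAbs_sub_le_length q)

lemma mmd_of_forall_dist_le {V : Type*} {G : SimpleGraph V} {u v : V}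
    (h : ∀ a b, G.dist a b ≤ G.dist u v) : mmd G u v :=
  ⟨fun w _ => (h v w).trans dist_comm.le, fun w _ => h u w⟩

def Iso.circulantGraph {G H : Type*} [AddGroup G] [AddGroup H] (e : G ≃+ H) (s : Set G) :
    circulantGraph s ≃g circulantGraph (e '' s) where
  toEquiv := e.toEquiv
  map_rel_iff' := by simp [← map_sub, e.injective.eq_iff]

section OddCycle

variable {m : ℕ}

lemma oddCycle_dist_le (u v : ZMod (2 * m + 1)) :
    (circulantGraph ({1} : Set (ZMod (2 * m + 1)))).dist u v ≤ m := by
  have := ZMod.natAbs_valMinAbs_le (v - u)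
  rw [circulantGraph_one_dist]
  omega

theorem oddCycle_mmd_iff (u v : ZMod (2 * m + 1)) :
    mmd (circulantGraph ({1} : Set (ZMod (2 * m + 1)))) u v ↔
      (circulantGraph ({1} : Set (ZMod (2 * m + 1)))).dist u v = m := by
  refine ⟨fun ⟨hu, _⟩ => ?_, fun h =>
    mmd_of_forall_dist_le fun a b => (oddCycle_dist_le a b).trans h.ge⟩
  by_contra hne
  have hlt : (u - v).valMinAbs.natAbs < (2 * m + 1) / 2 := by
    have := oddCycle_dist_le v u
    rw [dist_comm] at hne
    rw [circulantGraph_one_dist] at this hne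
    omega
  obtain ⟨w, hw, hdist⟩ : ∃ w, (w - u = 1 ∨ u - w = 1) ∧
      (circulantGraph ({1} : Set (ZMod (2 * m + 1)))).dist v w =
        (circulantGraph ({1} : Set (ZMod (2 * m + 1)))).dist v u + 1 := by
    simp only [circulantGraph_one_dist]
    rcases ZMod.natAbs_valMinAbs_add_one_or_sub_one hlt with h | h
    · exact ⟨u + 1, Or.inl (add_sub_cancel_left _ _), by rw [add_sub_right_comm, h]⟩
    · exact ⟨u - 1, Or.inr (sub_sub_cancel _ _), by rw [sub_right_comm, h]⟩
  have hadj : (circulantGraph ({1} : Set (ZMod (2 * m + 1)))).Adj u w := by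
    simp only [circulantGraph_adj, Set.mem_singleton_iff]
    exact ⟨fun h => by simp [h] at hdist, hw.symm⟩
  have := hu w hadj
  omega

theorem srGraph_oddCycle :
    srGraph (circulantGraph ({1} : Set (ZMod (2 * m + 1)))) =
      circulantGraph {(m : ZMod (2 * m + 1))} := by
  ext u v
  change u ≠ v ∧ mmd _ u v ↔ _
  rw [oddCycle_mmd_iff, circulantGraph_one_dist,
    ZMod.natAbs_valMinAbs_eq_iff (by omega), circulantGraph_adj, Set.mem_singleton_iff,
    Set.mem_singleton_iff, ← neg_sub u v, neg_inj, neg_eq_iff_eq_neg]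
  exact and_congr_right fun _ => or_comm

end OddCycle

end SimpleGraph

-- `ZMod (2 * m + 1)` is `Fin (2 * m + 1)` by definition, so after `cycleGraph_eq_circulantGraph`
-- the lemmas about `circulantGraph` over `ZMod` apply.
theorem stmt12_general (m : ℕ) :
    (∀ u v : Fin (2 * m + 1), u ≠ v →
      (mmd (cycleGraph (2 * m + 1)) u v ↔ (cycleGraph (2 * m + 1)).dist u v = m)) ∧
    Nonempty (srGraph (cycleGraph (2 * m + 1)) ≃g cycleGraph (2 * m + 1)) := by
  rw [cycleGraph_eq_circulantGraph]
  refine ⟨fun u v _ => oddCycle_mmd_iff u v, ?_⟩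
  let e := AddAut.mulRight (ZMod.unitOfCoprime m (by simp : m.Coprime (2 * m + 1)))
  have himage : e '' {1} = {(m : ZMod (2 * m + 1))} := by simp [e]
  exact ⟨srGraph_oddCycle ▸ (himage ▸ Iso.circulantGraph e {1}).symm⟩

theorem stmt12 (m : ℕ) (hm : 1 ≤ m) :
    (∀ u v : Fin (2 * m + 1), u ≠ v →
      (mmd (cycleGraph (2 * m + 1)) u v ↔ (cycleGraph (2 * m + 1)).dist u v = m)) ∧
    Nonempty (srGraph (cycleGraph (2 * m + 1)) ≃g cycleGraph (2 * m + 1)) :=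
  stmt12_general m
end

section
/- A tree T with L leaves (L ≥ 2) has strong metric dimension L − 1, and T has no strong basis forced vertices (no vertex belongs to every strong metric basis) when L ≥ 2. -/
open SimpleGraph

set_option linter.unusedSectionVars false

section Helpers

variable {V : Type*} [Fintype V] [DecidableEq V] {G : SimpleGraph V}

/-- In a tree, every path has length equal to the distance between its endpoints. -/
lemma tree_path_length (hT : G.IsTree) {u v : V} (p : G.Walk u v) (hp : p.IsPath) :
    p.length = G.dist u v := by
  obtain ⟨q, hq, hlen⟩ := hT.isConnected.exists_path_of_dist u v
  have h : (⟨p, hp⟩ : G.Path u v) = ⟨q, hq⟩ := hT.IsAcyclic.path_unique _ _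
  rw [← hlen]
  exact congrArg (fun r : G.Path u v => r.1.length) h

/-- In a tree, a vertex on a path between `u` and `x` splits the distance. -/
lemma tree_split (hT : G.IsTree) {u x : V} {r : G.Walk u x} (hr : r.IsPath) {w : V}
    (hw : w ∈ r.support) : G.dist u x = G.dist u w + G.dist w x := by
  have h3 := congrArg Walk.length (r.take_spec hw)
  rw [Walk.length_append] at h3
  rw [← tree_path_length hT r hr, ← h3,
    tree_path_length hT _ (hr.takeUntil hw), tree_path_length hT _ (hr.dropUntil hw)]

/-- In a finite tree, from any vertex `u` one can extend beyond `v ≠ u` to a leaf. -/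
lemma exists_leaf_beyond [DecidableRel G.Adj] (hT : G.IsTree) {u v : V} (huv : u ≠ v) :
    ∃ w : V, G.degree w = 1 ∧ G.dist u w = G.dist u v + G.dist v w := by
  classical
  have hconn := hT.isConnected
  obtain ⟨w, hwA, hmax⟩ := Finset.exists_max_image
    (Finset.univ.filter (fun w => G.dist u w = G.dist u v + G.dist v w))
    (fun w => G.dist u w) ⟨v, by simp⟩
  simp only [Finset.mem_filter, Finset.mem_univ, true_and] at hwA hmax
  have hduv : 0 < G.dist u v := hconn.pos_dist_of_ne huv
  have hduw : 0 < G.dist u w := by omega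
  have hwu : w ≠ u := by rintro rfl; simp [SimpleGraph.dist_self] at hduw
  refine ⟨w, ?_, hwA⟩
  obtain ⟨p, hp, hpl⟩ := hconn.exists_path_of_dist u w
  obtain ⟨y, hadj, q, hq⟩ := Walk.exists_eq_cons_of_ne hwu p.reverse
  have key : ∀ x : V, G.Adj w x → x ≠ y → G.dist u x = G.dist u w + 1 := by
    intro x hwx hxy
    have hle : G.dist u x ≤ G.dist u w + 1 := by
      have := hconn.dist_triangle (u := u) (v := w) (w := x)
      rwa [SimpleGraph.dist_eq_one_iff_adj.mpr hwx] at this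
    have hgt : ¬ G.dist u x ≤ G.dist u w := by
      intro hcon
      obtain ⟨r, hr, hrl⟩ := hconn.exists_path_of_dist u x
      by_cases hmem : w ∈ r.support
      · have := tree_split hT hr hmem
        rw [SimpleGraph.dist_eq_one_iff_adj.mpr hwx] at this
        omega
      · have hwmem : w ∉ r.reverse.support := by
          rw [Walk.support_reverse, List.mem_reverse]; exact hmem
        have hcpath : (r.concat hwx.symm).IsPath := by
          rw [← Walk.isPath_reverse_iff, Walk.reverse_concat]
          exact (Walk.cons_isPath_iff _ _).mpr ⟨hr.reverse, hwmem⟩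
        have hval : r.concat hwx.symm = p :=
          congrArg Subtype.val
            (hT.IsAcyclic.path_unique ⟨r.concat hwx.symm, hcpath⟩ ⟨p, hp⟩)
        have hrev := congrArg Walk.reverse hval
        rw [Walk.reverse_concat, hq] at hrev
        have hsup := congrArg Walk.support hrev
        rw [Walk.support_cons, Walk.support_cons] at hsup
        have hsup' : r.reverse.support = q.support := by
          injection hsup
        rw [Walk.support_eq_cons r.reverse, Walk.support_eq_cons q] at hsup'
        injection hsup' with h1 _
        exact hxy h1
    omega
  have hally : ∀ x : V, G.Adj w x → x = y := by
    intro x hwx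
    by_contra hxy
    have hdx := key x hwx hxy
    have t1 := hconn.dist_triangle (u := u) (v := v) (w := x)
    have t2 := hconn.dist_triangle (u := v) (v := w) (w := x)
    rw [SimpleGraph.dist_eq_one_iff_adj.mpr hwx] at t2
    have hxA : G.dist u x = G.dist u v + G.dist v x := by omega
    have := hmax x hxA
    omega
  have hnb : G.neighborFinset w = {y} := by
    apply Finset.eq_singleton_iff_unique_mem.mpr
    constructor
    · rw [SimpleGraph.mem_neighborFinset]; exact hadj
    · intro x hx
      exact hally x (by rwa [SimpleGraph.mem_neighborFinset] at hx)
  rw [← SimpleGraph.card_neighborFinset_eq_degree, hnb, Finset.card_singleton]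

/-- A leaf cannot lie strictly between two other vertices of a tree. -/
lemma leaf_not_between [DecidableRel G.Adj] (hT : G.IsTree) {u v w : V}
    (hv : G.degree v = 1) (h1 : w ≠ v) (h2 : v ≠ u)
    (hd : G.dist w u = G.dist w v + G.dist v u) : False := by
  have hconn := hT.isConnected
  obtain ⟨p, hp, hpl⟩ := hconn.exists_path_of_dist w v
  obtain ⟨q, hq, hql⟩ := hconn.exists_path_of_dist v u
  have happ : (p.append q).IsPath := by
    apply Walk.isPath_of_length_eq_dist
    rw [Walk.length_append, hpl, hql, hd]
  obtain ⟨y, hady, r1, hr1⟩ := Walk.exists_eq_cons_of_ne (Ne.symm h1) p.reverse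
  obtain ⟨z, hadz, r2, hr2⟩ := Walk.exists_eq_cons_of_ne h2 q
  have hy : y ∈ p.support := by
    have : y ∈ p.reverse.support := by
      rw [hr1, Walk.support_cons]
      exact List.mem_cons_of_mem _ r1.start_mem_support
    rwa [Walk.support_reverse, List.mem_reverse] at this
  have hz : z ∈ q.support.tail := by
    rw [hr2, Walk.support_cons, List.tail_cons]
    exact r2.start_mem_support
  have hnd := happ.support_nodup
  rw [Walk.support_append] at hnd
  have hdisj := List.disjoint_of_nodup_append hnd
  have hyz : y ≠ z := fun h => hdisj hy (h ▸ hz)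
  have hlt : 1 < G.degree v := by
    rw [← SimpleGraph.card_neighborFinset_eq_degree]
    exact Finset.one_lt_card.mpr
      ⟨y, by simpa using hady, z, by simpa using hadz, hyz⟩
  omega

/-- Only the two leaves themselves can strongly resolve a pair of leaves in a tree. -/
lemma resolver_eq [DecidableRel G.Adj] (hT : G.IsTree) {u v w : V}
    (hu : G.degree u = 1) (hv : G.degree v = 1) (huv : u ≠ v)
    (hres : stronglyResolves G w u v) : w = u ∨ w = v := by
  rcases hres with h | h
  · right; by_contra hwv
    exact leaf_not_between hT hv hwv (Ne.symm huv) h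
  · left; by_contra hwu
    exact leaf_not_between hT hu hwu huv h

end Helpers

theorem stmt17 {V : Type*} [Fintype V] [DecidableEq V] (G : SimpleGraph V)
    [DecidableRel G.Adj] (hT : G.IsTree)
    (hL : 2 ≤ (Finset.univ.filter (fun v : V => G.degree v = 1)).card) :
    sMetricDim G = (Finset.univ.filter (fun v : V => G.degree v = 1)).card - 1 ∧
    ∀ v : V, ¬ (∀ S : Set V, isStrongMetricBasis G S → v ∈ S) := by
  classical
  set Lf := Finset.univ.filter (fun v : V => G.degree v = 1) with hLf
  have hconn := hT.isConnected
  have hmemLf : ∀ x : V, x ∈ Lf ↔ G.degree x = 1 := by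
    intro x; simp [hLf]
  -- erasing any leaf from the set of leaves gives a strong resolving set
  have hres : ∀ ℓ ∈ Lf, isStrongResolving G ↑(Lf.erase ℓ) := by
    intro ℓ hℓ u v huv
    obtain ⟨w1, hw1leaf, hw1⟩ := exists_leaf_beyond hT huv
    obtain ⟨w2, hw2leaf, hw2⟩ := exists_leaf_beyond hT (Ne.symm huv)
    have hc : G.dist v u = G.dist u v := SimpleGraph.dist_comm
    have hne : w1 ≠ w2 := by
      rintro rfl
      have := hconn.pos_dist_of_ne huv
      omega
    by_cases h1 : w1 = ℓ
    · refine ⟨w2, ?_, Or.inr ?_⟩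
      · rw [Finset.mem_coe, Finset.mem_erase]
        exact ⟨fun h => hne (h1 ▸ h ▸ rfl), (hmemLf w2).mpr hw2leaf⟩
      · rw [SimpleGraph.dist_comm (u := w2) (v := v),
          SimpleGraph.dist_comm (u := w2) (v := u),
          SimpleGraph.dist_comm (u := u) (v := v)]
        omega
    · refine ⟨w1, ?_, Or.inl ?_⟩
      · rw [Finset.mem_coe, Finset.mem_erase]
        exact ⟨h1, (hmemLf w1).mpr hw1leaf⟩
      · rw [SimpleGraph.dist_comm (u := w1) (v := u),
          SimpleGraph.dist_comm (u := w1) (v := v),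
          SimpleGraph.dist_comm (u := v) (v := u)]
        omega
  -- every strong resolving set misses at most one leaf
  have hlow : ∀ S : Set V, isStrongResolving G S → Lf.card - 1 ≤ S.ncard := by
    intro S hS
    have hone : (Lf.filter (fun x => x ∉ S)).card ≤ 1 := by
      rw [Finset.card_le_one]
      intro a ha b hb
      by_contra hab
      rw [Finset.mem_filter] at ha hb
      obtain ⟨w, hwS, hwres⟩ := hS a b hab
      rcases resolver_eq hT ((hmemLf a).mp ha.1) ((hmemLf b).mp hb.1) hab hwres with
        rfl | rfl
      · exact ha.2 hwS
      · exact hb.2 hwS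
    have hsub : (Lf.filter (fun x => x ∈ S)) ⊆ S.toFinset := by
      intro x hx
      rw [Finset.mem_filter] at hx
      exact Set.mem_toFinset.mpr hx.2
    have h1 := Finset.card_filter_add_card_filter_not
      (s := Lf) (p := fun x => x ∈ S)
    have h2 : (Lf.filter (fun x => x ∈ S)).card ≤ S.ncard := by
      rw [Set.ncard_eq_toFinset_card']
      exact Finset.card_le_card hsub
    omega
  obtain ⟨ℓ0, hℓ0⟩ := Finset.card_pos.mp (by omega : 0 < Lf.card)
  have hcard : ∀ ℓ ∈ Lf, (↑(Lf.erase ℓ) : Set V).ncard = Lf.card - 1 := by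
    intro ℓ hℓ
    rw [Set.ncard_coe_finset, Finset.card_erase_of_mem hℓ]
  have hmem : (Lf.card - 1) ∈ {n | ∃ S : Set V, isStrongResolving G S ∧ S.ncard = n} :=
    ⟨↑(Lf.erase ℓ0), hres ℓ0 hℓ0, hcard ℓ0 hℓ0⟩
  have hdim : sMetricDim G = Lf.card - 1 := by
    rw [sMetricDim]
    apply le_antisymm
    · exact Nat.sInf_le hmem
    · apply le_csInf ⟨Lf.card - 1, hmem⟩
      rintro n ⟨S, hS, rfl⟩
      exact hlow S hS
  refine ⟨hdim, ?_⟩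
  intro v hv
  by_cases hvleaf : v ∈ Lf
  · have := hv ↑(Lf.erase v) ⟨hres v hvleaf, by rw [hcard v hvleaf, hdim]⟩
    rw [Finset.mem_coe, Finset.mem_erase] at this
    exact this.1 rfl
  · have := hv ↑(Lf.erase ℓ0) ⟨hres ℓ0 hℓ0, by rw [hcard ℓ0 hℓ0, hdim]⟩
    rw [Finset.mem_coe] at this
    exact hvleaf (Finset.mem_of_mem_erase this)
end

section
/- Let G be a unicyclic graph whose unique cycle C = v_0 v_1 ⋯ v_{g−1} v_0 has even length g, and suppose the antipodal cycle vertices v_i and v_{i+g/2} both have degree two in G. Then v_i and v_{i+g/2} are mutually maximally distant in G, and neither is mutually maximally distant with any other vertex of G. -/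
open SimpleGraph

namespace Stmt18Aux

set_option linter.unusedSectionVars false

variable {V : Type*} [Fintype V] [DecidableEq V]

instance instDecDel (G : SimpleGraph V) [DecidableRel G.Adj] (e : Sym2 V) :
    DecidableRel (G.deleteEdges {e}).Adj := fun a b =>
  decidable_of_iff (G.Adj a b ∧ ¬ s(a,b) = e) (by rw [deleteEdges_adj]; simp)

lemma dist_le_dist_of_le {G H : SimpleGraph V} (hGH : G ≤ H) {u v : V}
    (h : G.Reachable u v) : H.dist u v ≤ G.dist u v := by
  obtain ⟨p, hp⟩ := h.exists_walk_length_eq_dist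
  calc H.dist u v ≤ (p.map (Hom.ofLE hGH)).length := dist_le _
  _ = _ := by rw [Walk.length_map, hp]

lemma adj_dist_eq_one {G : SimpleGraph V} {u v : V} (h : G.Adj u v) : G.dist u v = 1 := by
  show (G.edist u v).toNat = 1
  rw [edist_eq_one_iff_adj.2 h]; rfl

lemma dist_add_dist_le_length {G : SimpleGraph V} {u v x : V} (p : G.Walk u v)
    (hx : x ∈ p.support) : G.dist u x + G.dist x v ≤ p.length := by
  have := congrArg Walk.length (p.take_spec hx)
  rw [Walk.length_append] at this
  have h1 := dist_le (p.takeUntil x hx)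
  have h2 := dist_le (p.dropUntil x hx)
  omega

lemma exists_penultimate {G : SimpleGraph V} (hconn : G.Connected) {u x : V} (hne : u ≠ x) :
    ∃ (w : V) (q : G.Walk u w), G.Adj x w ∧ x ∉ q.support ∧ q.length + 1 = G.dist u x := by
  obtain ⟨p0, hp0⟩ := hconn.exists_walk_length_eq_dist u x
  have hbl : p0.bypass.length = G.dist u x :=
    le_antisymm (hp0 ▸ Walk.length_bypass_le _) (dist_le _)
  have hpath : p0.bypass.IsPath := Walk.bypass_isPath _
  obtain ⟨w, h, q, hq⟩ := Walk.exists_eq_cons_of_ne (Ne.symm hne) p0.bypass.reverse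
  have hqp : (Walk.cons h q).IsPath := hq ▸ hpath.reverse
  rw [Walk.cons_isPath_iff] at hqp
  refine ⟨w, q.reverse, h, ?_, ?_⟩
  · rw [Walk.support_reverse, List.mem_reverse]; exact hqp.2
  · have := congrArg Walk.length hq
    rw [Walk.length_reverse, Walk.length_cons] at this
    rw [Walk.length_reverse]
    omega

lemma exists_penultimate_dist {G : SimpleGraph V} (hconn : G.Connected) {u x : V} (hne : u ≠ x) :
    ∃ w : V, G.Adj x w ∧ G.dist u w + 1 = G.dist u x := by
  obtain ⟨w, q, hadj, _, hlen⟩ := exists_penultimate hconn hne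
  have h1 : G.dist u w ≤ q.length := dist_le q
  have h2 : G.dist u x ≤ G.dist u w + 1 := by
    calc G.dist u x ≤ G.dist u w + G.dist w x := hconn.dist_triangle
    _ = G.dist u w + 1 := by rw [adj_dist_eq_one hadj.symm]
  exact ⟨w, hadj, by omega⟩

lemma card_le_card_edge_add_one {G : SimpleGraph V} [DecidableRel G.Adj]
    (hconn : G.Connected) : Fintype.card V ≤ G.edgeFinset.card + 1 := by
  have hne : Nonempty V := hconn.nonempty
  obtain ⟨r⟩ := hne
  have H : ∀ v : {v : V // v ≠ r}, ∃ w, G.Adj (v : V) w ∧ G.dist r w + 1 = G.dist r (v : V) :=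
    fun v => exists_penultimate_dist hconn (Ne.symm v.2)
  choose w hadj hdist using H
  have Finj : Function.Injective (fun v : {v : V // v ≠ r} =>
      (⟨s(w v, (v : V)), (G.mem_edgeFinset).2 ((G.mem_edgeSet).2 (hadj v).symm)⟩ :
        {e : Sym2 V // e ∈ G.edgeFinset})) := by
    intro a b hab
    simp only [Subtype.mk.injEq, Sym2.eq, Sym2.rel_iff', Prod.mk.injEq, Prod.swap_prod_mk] at hab
    rcases hab with ⟨-, h2⟩ | ⟨h1, h2⟩
    · exact Subtype.ext h2
    · have da := hdist a
      have db := hdist b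
      rw [h1] at da; rw [← h2] at db
      omega
  have hcard := Fintype.card_le_of_injective _ Finj
  have h1 : Fintype.card {v : V // v ≠ r} = Fintype.card V - 1 := by
    simp [Fintype.card_subtype_compl, Fintype.card_subtype_eq]
  have h2 : Fintype.card {e : Sym2 V // e ∈ G.edgeFinset} = G.edgeFinset.card :=
    Fintype.card_coe _
  have h3 : 0 < Fintype.card V := Fintype.card_pos_iff.mpr ⟨r⟩
  omega




lemma edgeFinset_delete_card {G : SimpleGraph V} [DecidableRel G.Adj] {e : Sym2 V}
    (he : e ∈ G.edgeSet) :
    (G.deleteEdges {e}).edgeFinset.card + 1 = G.edgeFinset.card := by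
  have hfe : (G.deleteEdges {e}).edgeFinset = G.edgeFinset.erase e := by
    ext x
    induction x with
    | _ a b =>
      simp only [mem_edgeFinset, Finset.mem_erase, mem_edgeSet, deleteEdges_adj,
        Set.mem_singleton_iff]
      tauto
  rw [hfe, Finset.card_erase_of_mem (mem_edgeFinset.2 he)]
  have : 0 < G.edgeFinset.card := Finset.card_pos.2 ⟨e, mem_edgeFinset.2 he⟩
  omega

lemma reachable_delete {G : SimpleGraph V} {a b : V}
    (hab : (G.deleteEdges {s(a,b)}).Reachable a b) {u v : V} (huv : G.Reachable u v) :
    (G.deleteEdges {s(a,b)}).Reachable u v := by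
  obtain ⟨p⟩ := huv
  induction p with
  | nil => exact Reachable.refl _
  | @cons x y z h q ih =>
    refine Reachable.trans ?_ ih
    by_cases he : s(x, y) = s(a, b)
    · rw [Sym2.eq_iff] at he
      rcases he with ⟨rfl, rfl⟩ | ⟨rfl, rfl⟩
      · exact hab
      · exact hab.symm
    · exact Adj.reachable (by rw [deleteEdges_adj]; exact ⟨h, by simpa using he⟩)

lemma connected_delete {G : SimpleGraph V} {a b : V} (hconn : G.Connected)
    (hab : (G.deleteEdges {s(a,b)}).Reachable a b) : (G.deleteEdges {s(a,b)}).Connected := by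
  rw [connected_iff]
  exact ⟨fun u v => reachable_delete hab (hconn u v), hconn.nonempty⟩

lemma isTree_of_card {G : SimpleGraph V} [DecidableRel G.Adj] (hconn : G.Connected)
    (hcard : G.edgeFinset.card + 1 = Fintype.card V) : G.IsTree := by
  refine ⟨hconn, ?_⟩
  intro x p hp
  -- p is a cycle at x
  cases p with
  | nil => exact Walk.IsCycle.not_of_nil hp
  | @cons x y _ h q =>
    -- delete edge s(x,y); q still connects y to x
    have hq_edges : s(x, y) ∉ q.edges := by
      have := hp.edges_nodup
      rw [Walk.edges_cons] at this
      exact (List.nodup_cons.1 this).1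
    have hq' : ∀ e ∈ q.edges, e ∈ (G.deleteEdges {s(x,y)}).edgeSet := by
      intro e heq
      rw [edgeSet_deleteEdges]
      exact ⟨q.edges_subset_edgeSet heq, by
        simp only [Set.mem_singleton_iff]
        rintro rfl; exact hq_edges heq⟩
    have hreach : (G.deleteEdges {s(x,y)}).Reachable x y :=
      ((q.transfer _ hq').reverse).reachable
    have hconn' := connected_delete hconn hreach
    have hle := card_le_card_edge_add_one hconn'
    have hc2 := edgeFinset_delete_card ((G.mem_edgeSet).2 h)
    omega

lemma tree_path_length_eq_dist {G : SimpleGraph V} (hT : G.IsTree) {a b : V}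
    (p : G.Walk a b) (hp : p.IsPath) : p.length = G.dist a b := by
  obtain ⟨q, hq⟩ := hT.isConnected.exists_walk_length_eq_dist a b
  have hqb : q.bypass.length = G.dist a b :=
    le_antisymm (hq ▸ Walk.length_bypass_le _) (dist_le _)
  have := (hT.existsUnique_path a b).unique hp (Walk.bypass_isPath q)
  rw [this, hqb]

lemma isPath_concat {G : SimpleGraph V} {a b c : V} {p : G.Walk a b} (hp : p.IsPath)
    (h : G.Adj b c) (hc : c ∉ p.support) : (p.concat h).IsPath := by
  rw [← Walk.isPath_reverse_iff, Walk.reverse_concat, Walk.cons_isPath_iff,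
    Walk.isPath_reverse_iff, Walk.support_reverse]
  exact ⟨hp, by simpa using hc⟩

-- TL1
lemma tree_adj_dist {G : SimpleGraph V} (hT : G.IsTree) {x y : V} (u : V) (h : G.Adj x y) :
    G.dist u y = G.dist u x + 1 ∨ G.dist u x = G.dist u y + 1 := by
  have hconn := hT.isConnected
  have t1 : G.dist u y ≤ G.dist u x + 1 := by
    have := hconn.dist_triangle (v := x) (w := y) (u := u)
    rwa [adj_dist_eq_one h] at this
  have t2 : G.dist u x ≤ G.dist u y + 1 := by
    have := hconn.dist_triangle (v := y) (w := x) (u := u)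
    rwa [adj_dist_eq_one h.symm] at this
  rcases Nat.lt_trichotomy (G.dist u x) (G.dist u y) with hlt | heq | hgt
  · left; omega
  · exfalso
    -- equal distances to adjacent vertices: contradiction in a tree
    obtain ⟨px, hpx⟩ := hconn.exists_walk_length_eq_dist u x
    have hpxb : px.bypass.length = G.dist u x :=
      le_antisymm (hpx ▸ Walk.length_bypass_le _) (dist_le _)
    have hy : y ∉ px.bypass.support := by
      intro hy
      have := dist_add_dist_le_length px.bypass hy
      rw [hpxb, adj_dist_eq_one h.symm] at this
      omega
    have hcat : (px.bypass.concat h).IsPath := isPath_concat (Walk.bypass_isPath _) h hy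
    obtain ⟨py, hpy⟩ := hconn.exists_walk_length_eq_dist u y
    have hpyb : py.bypass.length = G.dist u y :=
      le_antisymm (hpy ▸ Walk.length_bypass_le _) (dist_le _)
    have := (hT.existsUnique_path u y).unique hcat (Walk.bypass_isPath py)
    have hlen := congrArg Walk.length this
    rw [Walk.length_concat, hpxb, hpyb, heq] at hlen
    omega
  · right; omega

-- TL2
lemma tree_step {G : SimpleGraph V} (hT : G.IsTree) {x y z : V} (u : V) (hxy : G.Adj x y)
    (hyz : G.Adj y z) (hxz : x ≠ z) (h1 : G.dist u y = G.dist u x + 1) :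
    G.dist u z = G.dist u y + 1 := by
  have hconn := hT.isConnected
  rcases tree_adj_dist hT u hyz with h | h
  · exact h
  · exfalso
    -- dy = dz + 1; build two distinct paths u → y
    obtain ⟨px, hpx⟩ := hconn.exists_walk_length_eq_dist u x
    have hpxb : px.bypass.length = G.dist u x :=
      le_antisymm (hpx ▸ Walk.length_bypass_le _) (dist_le _)
    have hyx : y ∉ px.bypass.support := by
      intro hy
      have := dist_add_dist_le_length px.bypass hy
      rw [hpxb, adj_dist_eq_one hxy.symm] at this
      omega
    obtain ⟨pz, hpz⟩ := hconn.exists_walk_length_eq_dist u z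
    have hpzb : pz.bypass.length = G.dist u z :=
      le_antisymm (hpz ▸ Walk.length_bypass_le _) (dist_le _)
    have hyz' : y ∉ pz.bypass.support := by
      intro hy
      have := dist_add_dist_le_length pz.bypass hy
      rw [hpzb, adj_dist_eq_one hyz] at this
      omega
    have hP1 : (px.bypass.concat hxy).IsPath := isPath_concat (Walk.bypass_isPath _) hxy hyx
    have hP2 : (pz.bypass.concat hyz.symm).IsPath :=
      isPath_concat (Walk.bypass_isPath _) hyz.symm hyz'
    have hps := (hT.existsUnique_path u y).unique hP1 hP2
    have hedges := congrArg Walk.edges hps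
    rw [Walk.edges_concat, Walk.edges_concat] at hedges
    have hlens : px.bypass.edges.length = pz.bypass.edges.length := by
      rw [Walk.length_edges, Walk.length_edges, hpxb, hpzb]
      omega
    rw [List.concat_eq_append, List.concat_eq_append] at hedges
    obtain ⟨-, h2⟩ := List.append_inj' hedges rfl
    have : s(x,y) = s(z,y) := by simpa using h2
    rw [Sym2.congr_left] at this
    exact hxz this

-- TL3 : one increasing step propagates
lemma tree_ray_step {G : SimpleGraph V} (hT : G.IsTree) (u : V) (p : ℕ → V) (L : ℕ)
    (hadj : ∀ k, k + 1 ≤ L → G.Adj (p k) (p (k+1)))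
    (hne : ∀ k, k + 2 ≤ L → p k ≠ p (k+2)) {j : ℕ} (hj : j + 1 ≤ L)
    (hup : G.dist u (p (j+1)) = G.dist u (p j) + 1) :
    ∀ d, j + 1 + d ≤ L → G.dist u (p (j + d + 1)) = G.dist u (p (j + d)) + 1 := by
  intro d
  induction d with
  | zero => intro _; simpa using hup
  | succ n ih =>
    intro hd
    have hprev := ih (by omega)
    have h1 : G.Adj (p (j + n)) (p (j + n + 1)) := hadj (j+n) (by omega)
    have h2 : G.Adj (p (j + n + 1)) (p (j + n + 2)) := hadj (j+n+1) (by omega)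
    have h3 : p (j + n) ≠ p (j + n + 2) := hne (j+n) (by omega)
    have := tree_step hT u h1 h2 h3 hprev
    have e1 : j + (n+1) + 1 = j + n + 2 := by omega
    have e2 : j + (n+1) = j + n + 1 := by omega
    rw [e1, e2]
    exact this

lemma tree_ray {G : SimpleGraph V} (hT : G.IsTree) (u : V) (p : ℕ → V) (L : ℕ)
    (hadj : ∀ k, k + 1 ≤ L → G.Adj (p k) (p (k+1)))
    (hne : ∀ k, k + 2 ≤ L → p k ≠ p (k+2)) {j : ℕ} (hj : j + 1 ≤ L)
    (hup : G.dist u (p (j+1)) = G.dist u (p j) + 1) :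
    ∀ d, j + d ≤ L → G.dist u (p (j + d)) = G.dist u (p j) + d := by
  intro d
  induction d with
  | zero => intro _; simp
  | succ n ih =>
    intro hd
    have hprev := ih (by omega)
    have hstep := tree_ray_step hT u p L hadj hne hj hup n (by omega)
    have e1 : j + (n+1) = j + n + 1 := by omega
    rw [e1, hstep, hprev]
    omega

section Cyc

variable {g : ℕ}

def cv (hg0 : 0 < g) (c : Fin g → V) (a : ℕ) : V := c ⟨a % g, Nat.mod_lt _ hg0⟩

lemma mod_add_cancel {a k l : ℕ} (_hg0 : 0 < g) :
    (a + k) % g = (a + l) % g ↔ k % g = l % g := by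
  constructor
  · intro h; exact Nat.ModEq.add_left_cancel' a h
  · intro h; exact Nat.ModEq.add_left a h

lemma cv_congr {hg0 : 0 < g} {c : Fin g → V} {a b : ℕ} (h : a % g = b % g) :
    cv hg0 c a = cv hg0 c b := by
  unfold cv; congr 1; exact Fin.ext h

lemma cv_eq_iff {hg0 : 0 < g} {c : Fin g → V} (hinj : Function.Injective c) {a b : ℕ} :
    cv hg0 c a = cv hg0 c b ↔ a % g = b % g := by
  constructor
  · intro h
    have := hinj h
    simpa using congrArg Fin.val this
  · exact cv_congr

lemma cv_add_g {hg0 : 0 < g} {c : Fin g → V} (a : ℕ) :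
    cv hg0 c (a + g) = cv hg0 c a := cv_congr (Nat.add_mod_right a g)

variable {G : SimpleGraph V}

lemma cv_adj (hg0 : 0 < g) {c : Fin g → V}
    (hcyc : ∀ i : Fin g, G.Adj (c i) (c ⟨(i.val + 1) % g, Nat.mod_lt _ hg0⟩)) (a : ℕ) :
    G.Adj (cv hg0 c a) (cv hg0 c (a+1)) := by
  have h := hcyc ⟨a % g, Nat.mod_lt _ hg0⟩
  have he : (⟨(a % g + 1) % g, Nat.mod_lt _ hg0⟩ : Fin g) = ⟨(a+1) % g, Nat.mod_lt _ hg0⟩ :=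
    Fin.ext (Nat.mod_add_mod a g 1)
  rw [he] at h
  exact h

def ce (hg0 : 0 < g) (c : Fin g → V) (a : ℕ) : Sym2 V := s(cv hg0 c a, cv hg0 c (a+1))

lemma ce_mem (hg0 : 0 < g) {c : Fin g → V}
    (hcyc : ∀ i : Fin g, G.Adj (c i) (c ⟨(i.val + 1) % g, Nat.mod_lt _ hg0⟩)) (a : ℕ) :
    ce hg0 c a ∈ G.edgeSet := (G.mem_edgeSet).2 (cv_adj hg0 hcyc a)

lemma ce_eq_iff {hg0 : 0 < g} {c : Fin g → V} (hinj : Function.Injective c) (hg3 : 3 ≤ g)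
    {a b : ℕ} : ce hg0 c a = ce hg0 c b ↔ a % g = b % g := by
  unfold ce
  rw [Sym2.eq_iff]
  constructor
  · rintro (⟨h1, -⟩ | ⟨h1, h2⟩)
    · exact (cv_eq_iff hinj).1 h1
    · exfalso
      rw [cv_eq_iff hinj] at h1 h2
      have m1 : Nat.ModEq g a (b+1) := h1
      have m2 : Nat.ModEq g (a+1) b := h2
      have m3 : Nat.ModEq g (b+2) (b+0) := by
        calc b+2 = (b+1)+1 := rfl
        _ ≡ a + 1 [MOD g] := (m1.symm.add_right 1)
        _ ≡ b [MOD g] := m2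
        _ = b + 0 := rfl
      have h20 : 2 % g = 0 % g := Nat.ModEq.add_left_cancel' b m3
      rw [Nat.mod_eq_of_lt (by omega), Nat.zero_mod] at h20
      omega
  · intro h
    left
    exact ⟨cv_congr h, cv_congr (Nat.ModEq.add_right 1 h)⟩

variable (hg0 : 0 < g) (c : Fin g → V)
variable (hcyc : ∀ i : Fin g, G.Adj (c i) (c ⟨(i.val + 1) % g, Nat.mod_lt _ hg0⟩))

def arcWalk : (t a : ℕ) → G.Walk (cv hg0 c a) (cv hg0 c (a + t))
  | 0, _ => Walk.nil
  | (t+1), a => Walk.cons (cv_adj hg0 hcyc a)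
      ((arcWalk t (a+1)).copy rfl (by congr 1; omega))

lemma arcWalk_length (t a : ℕ) : (arcWalk hg0 c hcyc t a).length = t := by
  induction t generalizing a with
  | zero => rfl
  | succ n ih => simp [arcWalk, ih]

lemma arcWalk_support {t a : ℕ} {x : V} (hx : x ∈ (arcWalk hg0 c hcyc t a).support) :
    ∃ s, s ≤ t ∧ x = cv hg0 c (a + s) := by
  induction t generalizing a with
  | zero =>
    simp only [arcWalk, Walk.support_nil, List.mem_singleton] at hx
    exact ⟨0, le_refl _, hx⟩
  | succ n ih =>
    simp only [arcWalk, Walk.support_cons, Walk.support_copy, List.mem_cons] at hx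
    rcases hx with h | h
    · exact ⟨0, by omega, h⟩
    · obtain ⟨s, hs, hx⟩ := ih h
      exact ⟨s + 1, by omega, by rw [hx, show a + 1 + s = a + (s+1) by omega]⟩

lemma arcWalk_edges {t a : ℕ} {e : Sym2 V} (he : e ∈ (arcWalk hg0 c hcyc t a).edges) :
    ∃ s, s < t ∧ e = ce hg0 c (a + s) := by
  induction t generalizing a with
  | zero => simp [arcWalk] at he
  | succ n ih =>
    simp only [arcWalk, Walk.edges_cons, Walk.edges_copy, List.mem_cons] at he
    rcases he with h | h
    · exact ⟨0, by omega, h⟩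
    · obtain ⟨s, hs, he⟩ := ih h
      exact ⟨s + 1, by omega, by rw [he, show a + 1 + s = a + (s+1) by omega]⟩

lemma arcWalk_isPath (hinj : Function.Injective c) {t : ℕ} (ht : t < g) (a : ℕ) :
    (arcWalk hg0 c hcyc t a).IsPath := by
  induction t generalizing a with
  | zero => exact Walk.IsPath.nil
  | succ n ih =>
    rw [arcWalk, Walk.cons_isPath_iff]
    refine ⟨by rw [Walk.isPath_copy]; exact ih (by omega) (a+1), ?_⟩
    intro hmem
    rw [Walk.support_copy] at hmem
    obtain ⟨s, hs, hx⟩ := arcWalk_support hg0 c hcyc hmem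
    rw [cv_eq_iff hinj] at hx
    rw [show a + 1 + s = a + (1 + s) by omega] at hx
    have hx' : (a + 0) % g = (a + (1 + s)) % g := by simpa using hx
    rw [mod_add_cancel hg0] at hx'
    rw [Nat.zero_mod, Nat.mod_eq_of_lt (by omega)] at hx'
    omega

include hcyc in
lemma dist_cv_le (a t : ℕ) : G.dist (cv hg0 c a) (cv hg0 c (a + t)) ≤ t := by
  have := dist_le (arcWalk hg0 c hcyc t a)
  rwa [arcWalk_length] at this

-- part4

include hg0 in
lemma rep_mod (a j : ℕ) : ∃ r, r < g ∧ (a + r) % g = j % g := by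
  have h1 : a % g < g := Nat.mod_lt _ hg0
  have h2 : j % g < g := Nat.mod_lt _ hg0
  rcases le_or_gt (a % g) (j % g) with hle | hlt
  · refine ⟨j % g - a % g, by omega, ?_⟩
    rw [← Nat.mod_add_mod, show a % g + (j % g - a % g) = j % g by omega,
      Nat.mod_eq_of_lt h2]
  · refine ⟨j % g + g - a % g, by omega, ?_⟩
    rw [← Nat.mod_add_mod, show a % g + (j % g + g - a % g) = j % g + g by omega,
      Nat.add_mod_right, Nat.mod_eq_of_lt h2]

include hcyc in
lemma arcWalk_edges_avoid (hinj : Function.Injective c) (hg3 : 3 ≤ g) {j t a : ℕ}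
    (havoid : ∀ s, s < t → (a + s) % g ≠ j % g) :
    ∀ e ∈ (arcWalk hg0 c hcyc t a).edges, e ∈ (G.deleteEdges {ce hg0 c j}).edgeSet := by
  intro e he
  obtain ⟨s, hs, rfl⟩ := arcWalk_edges hg0 c hcyc he
  rw [edgeSet_deleteEdges]
  refine ⟨(arcWalk hg0 c hcyc t a).edges_subset_edgeSet he, ?_⟩
  simp only [Set.mem_singleton_iff]
  rw [ce_eq_iff hinj hg3]
  exact havoid s hs

include hcyc in
lemma Gd_connected (hconn : G.Connected) (hinj : Function.Injective c) (hg3 : 3 ≤ g) (j : ℕ) :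
    (G.deleteEdges {ce hg0 c j}).Connected := by
  have havoid : ∀ s, s < g - 1 → (j + 1 + s) % g ≠ j % g := by
    intro s hs heq
    rw [show j + 1 + s = j + (1 + s) by omega] at heq
    have : (j + (1+s)) % g = (j + 0) % g := by simpa using heq
    rw [mod_add_cancel hg0, Nat.zero_mod, Nat.mod_eq_of_lt (by omega)] at this
    omega
  have warc := (arcWalk hg0 c hcyc (g-1) (j+1)).transfer _
    (arcWalk_edges_avoid hg0 c hcyc hinj hg3 havoid)
  have hend : cv hg0 c (j + 1 + (g-1)) = cv hg0 c j := by
    rw [show j + 1 + (g - 1) = j + g by omega, cv_add_g]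
  rw [hend] at warc
  have hreach : (G.deleteEdges {ce hg0 c j}).Reachable (cv hg0 c j) (cv hg0 c (j+1)) :=
    warc.reverse.reachable
  exact connected_delete hconn hreach

include hcyc in
lemma Gd_isTree [DecidableRel G.Adj] (hconn : G.Connected)
    (hunicyclic : G.edgeFinset.card = Fintype.card V)
    (hinj : Function.Injective c) (hg3 : 3 ≤ g) (j : ℕ) :
    (G.deleteEdges {ce hg0 c j}).IsTree := by
  refine isTree_of_card (Gd_connected hg0 c hcyc hconn hinj hg3 j) ?_
  have := edgeFinset_delete_card (G := G) (ce_mem hg0 hcyc j)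
  omega

include hcyc in
lemma Gd_dist_arc [DecidableRel G.Adj] (hconn : G.Connected)
    (hunicyclic : G.edgeFinset.card = Fintype.card V)
    (hinj : Function.Injective c) (hg3 : 3 ≤ g) {j t a : ℕ} (ht : t < g)
    (havoid : ∀ s, s < t → (a + s) % g ≠ j % g) :
    (G.deleteEdges {ce hg0 c j}).dist (cv hg0 c a) (cv hg0 c (a + t)) = t := by
  have H := arcWalk_edges_avoid hg0 c hcyc hinj hg3 havoid
  have hpath : ((arcWalk hg0 c hcyc t a).transfer _ H).IsPath := by
    rw [Walk.isPath_def, Walk.support_transfer]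
    exact (arcWalk_isPath hg0 c hcyc hinj ht a).2
  have := tree_path_length_eq_dist
    (Gd_isTree hg0 c hcyc hconn hunicyclic hinj hg3 j)
    ((arcWalk hg0 c hcyc t a).transfer _ H) hpath
  rw [← this, Walk.length_transfer, arcWalk_length]

include hcyc in
lemma exists_missed_edge (hinj : Function.Injective c) (hg3 : 3 ≤ g) {u v : V}
    (p : G.Walk u v) (hlen : p.length < g) : ∃ j, j < g ∧ ce hg0 c j ∉ p.edges := by
  by_contra hall
  push_neg at hall
  have Finj : Set.InjOn (fun j : Fin g => ce hg0 c j.val) ↑(Finset.univ : Finset (Fin g)) := by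
    intro x _ y _ hxy
    simp only at hxy
    rw [ce_eq_iff hinj hg3, Nat.mod_eq_of_lt x.2, Nat.mod_eq_of_lt y.2] at hxy
    exact Fin.ext hxy
  have hsub : ∀ j : Fin g, j ∈ Finset.univ →
      (fun j : Fin g => ce hg0 c j.val) j ∈ p.edges.toFinset := by
    intro j _
    rw [List.mem_toFinset]
    exact hall j.val j.2
  have := Finset.card_le_card_of_injOn _ hsub Finj
  rw [Finset.card_univ, Fintype.card_fin] at this
  have h2 := p.edges.toFinset_card_le
  rw [Walk.length_edges] at h2
  omega

include hcyc in
lemma dist_antipodal [DecidableRel G.Adj] (hconn : G.Connected)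
    (hunicyclic : G.edgeFinset.card = Fintype.card V)
    (hinj : Function.Injective c) {m : ℕ} (hgm : g = 2*m) (hg3 : 3 ≤ g) (a : ℕ) :
    G.dist (cv hg0 c a) (cv hg0 c (a + m)) = m := by
  have hm2 : 2 ≤ m := by omega
  have hle : G.dist (cv hg0 c a) (cv hg0 c (a + m)) ≤ m := dist_cv_le hg0 c hcyc a m
  rcases Nat.eq_or_lt_of_le hle with heq | hlt
  · exact heq
  exfalso
  obtain ⟨p0, hp0⟩ := hconn.exists_walk_length_eq_dist (cv hg0 c a) (cv hg0 c (a+m))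
  obtain ⟨j, hj, hmiss⟩ := exists_missed_edge hg0 c hcyc hinj hg3 p0 (by omega)
  obtain ⟨r, hr, hrj⟩ := rep_mod (g := g) hg0 a j
  have htrans : ∀ e ∈ p0.edges, e ∈ (G.deleteEdges {ce hg0 c j}).edgeSet := by
    intro e he
    rw [edgeSet_deleteEdges]
    exact ⟨p0.edges_subset_edgeSet he, by
      simp only [Set.mem_singleton_iff]; rintro rfl; exact hmiss he⟩
  have hdle : (G.deleteEdges {ce hg0 c j}).dist (cv hg0 c a) (cv hg0 c (a+m)) ≤ p0.length :=
    dist_le (p0.transfer _ htrans) |>.trans (by rw [Walk.length_transfer])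
  rcases lt_or_ge r m with hrm | hrm
  · -- j on first arc; use arc from a+m of length m
    have havoid : ∀ s, s < m → (a + m + s) % g ≠ j % g := by
      intro s hs heq
      rw [← hrj, show a + m + s = a + (m + s) by omega, mod_add_cancel hg0,
        Nat.mod_eq_of_lt (by omega), Nat.mod_eq_of_lt (by omega)] at heq
      omega
    have harc := Gd_dist_arc hg0 c hcyc hconn hunicyclic hinj hg3 (by omega : m < g) havoid
    have hend : cv hg0 c (a + m + m) = cv hg0 c a := by
      rw [show a + m + m = a + g by omega, cv_add_g]
    rw [hend] at harc
    rw [(G.deleteEdges {ce hg0 c j}).dist_comm] at harc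
    omega
  · -- j on second arc; use arc from a of length m
    have havoid : ∀ s, s < m → (a + s) % g ≠ j % g := by
      intro s hs heq
      rw [← hrj, mod_add_cancel hg0,
        Nat.mod_eq_of_lt (by omega), Nat.mod_eq_of_lt (by omega)] at heq
      omega
    have harc := Gd_dist_arc hg0 c hcyc hconn hunicyclic hinj hg3 (by omega : m < g) havoid
    omega

-- part5
include hcyc in
lemma neighbors_of_deg2 [DecidableRel G.Adj] (hinj : Function.Injective c) (hg3 : 3 ≤ g)
    {a : ℕ} (hdeg : G.degree (cv hg0 c a) = 2) {w : V} (hadj : G.Adj (cv hg0 c a) w) :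
    w = cv hg0 c (a+1) ∨ w = cv hg0 c (a + g - 1) := by
  have h1 : cv hg0 c (a+1) ∈ G.neighborFinset (cv hg0 c a) :=
    (G.mem_neighborFinset _ _).2 (cv_adj hg0 hcyc a)
  have hadj2 : G.Adj (cv hg0 c a) (cv hg0 c (a + g - 1)) := by
    have := cv_adj hg0 hcyc (a + g - 1)
    rw [show a + g - 1 + 1 = a + g by omega, cv_add_g] at this
    exact this.symm
  have h2 : cv hg0 c (a + g - 1) ∈ G.neighborFinset (cv hg0 c a) :=
    (G.mem_neighborFinset _ _).2 hadj2
  have hne : cv hg0 c (a+1) ≠ cv hg0 c (a + g - 1) := by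
    intro hcon
    rw [cv_eq_iff hinj, show a + g - 1 = a + 1 + (g - 2) by omega] at hcon
    have : (a + 1 + 0) % g = (a + 1 + (g-2)) % g := by simpa using hcon
    rw [mod_add_cancel hg0, Nat.zero_mod, Nat.mod_eq_of_lt (by omega)] at this
    omega
  have hsub : ({cv hg0 c (a+1), cv hg0 c (a + g - 1)} : Finset V) ⊆
      G.neighborFinset (cv hg0 c a) := by
    intro x hx
    rcases Finset.mem_insert.1 hx with rfl | hx
    · exact h1
    · rw [Finset.mem_singleton] at hx; subst hx; exact h2
  have hcards : (G.neighborFinset (cv hg0 c a)).card ≤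
      ({cv hg0 c (a+1), cv hg0 c (a + g - 1)} : Finset V).card := by
    rw [Finset.card_pair hne, G.card_neighborFinset_eq_degree, hdeg]
  have heq := Finset.eq_of_subset_of_card_le hsub hcards
  have hw : w ∈ G.neighborFinset (cv hg0 c a) := (G.mem_neighborFinset _ _).2 hadj
  rw [← heq] at hw
  rcases Finset.mem_insert.1 hw with rfl | hw
  · exact Or.inl rfl
  · rw [Finset.mem_singleton] at hw; exact Or.inr hw

include hcyc in
lemma lemmaDir [DecidableRel G.Adj] (hconn : G.Connected)
    (hunicyclic : G.edgeFinset.card = Fintype.card V)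
    (hinj : Function.Injective c) {m : ℕ} (hgm : g = 2*m) (hg3 : 3 ≤ g)
    {a : ℕ} (hdeg : G.degree (cv hg0 c a) = 2) {u : V}
    (hB : G.dist u (cv hg0 c (a + g - 1)) ≤ G.dist u (cv hg0 c a))
    (hT : (G.deleteEdges {ce hg0 c (a + g - 1)}).dist u (cv hg0 c a) ≤
      G.dist u (cv hg0 c a)) :
    G.dist u (cv hg0 c (a + m)) + m ≤ G.dist u (cv hg0 c a) := by
  have hm2 : 2 ≤ m := by omega
  set T := G.deleteEdges {ce hg0 c (a + g - 1)} with hTdef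
  have hTtree : T.IsTree := Gd_isTree hg0 c hcyc hconn hunicyclic hinj hg3 (a + g - 1)
  have hTconn : T.Connected := hTtree.isConnected
  set D := G.dist u (cv hg0 c a) with hDdef
  have hcvne : cv hg0 c a ≠ cv hg0 c (a + g - 1) := by
    intro hcon
    rw [cv_eq_iff hinj, show a + g - 1 = a + (g - 1) by omega] at hcon
    have : (a + 0) % g = (a + (g-1)) % g := by simpa using hcon
    rw [mod_add_cancel hg0, Nat.zero_mod, Nat.mod_eq_of_lt (by omega)] at this
    omega
  have hune : u ≠ cv hg0 c a := by
    rintro rfl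
    have h0 : D = 0 := by rw [hDdef, G.dist_self]
    have hz : G.dist (cv hg0 c a) (cv hg0 c (a + g - 1)) = 0 := by omega
    exact hcvne ((hconn.dist_eq_zero_iff).1 hz)
  have hGle : ∀ x : V, G.dist u x ≤ T.dist u x := fun x =>
    dist_le_dist_of_le (deleteEdges_le _) (hTconn u x)
  have hTD : T.dist u (cv hg0 c a) = D := le_antisymm hT (hGle _)
  -- the deleted edge, in the form incident to cv a
  have hdel_edge : s(cv hg0 c a, cv hg0 c (a + g - 1)) = ce hg0 c (a + g - 1) := by
    unfold ce
    rw [show a + g - 1 + 1 = a + g by omega, cv_add_g, Sym2.eq_swap]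
  -- penultimate vertex in T
  obtain ⟨w, hwadj, hwd⟩ := exists_penultimate_dist hTconn hune
  have hwG : G.Adj (cv hg0 c a) w := (deleteEdges_adj.1 hwadj).1
  have hw1 : w = cv hg0 c (a+1) := by
    rcases neighbors_of_deg2 hg0 c hcyc hinj hg3 hdeg hwG with h | h
    · exact h
    · exfalso
      subst h
      have := (deleteEdges_adj.1 hwadj).2
      rw [hdel_edge] at this
      exact this rfl
  subst hw1
  have hT1 : T.dist u (cv hg0 c (a+1)) + 1 = D := by rw [← hTD]; exact hwd
  -- T-distance to cv (a+g-1) is at most D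
  have hQ : T.dist u (cv hg0 c (a + g - 1)) ≤ D := by
    obtain ⟨q0, hq0⟩ := hconn.exists_walk_length_eq_dist u (cv hg0 c (a + g - 1))
    have hqb : q0.bypass.length = G.dist u (cv hg0 c (a + g - 1)) :=
      le_antisymm (hq0 ▸ Walk.length_bypass_le _) (dist_le _)
    have hnotin : cv hg0 c a ∉ q0.bypass.support := by
      intro hmem
      have hsplit := dist_add_dist_le_length q0.bypass hmem
      have hpos : 0 < G.dist (cv hg0 c a) (cv hg0 c (a + g - 1)) :=
        hconn.pos_dist_of_ne hcvne
      rw [hqb] at hsplit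
      omega
    have htrans : ∀ e ∈ q0.bypass.edges, e ∈ T.edgeSet := by
      intro e he
      rw [hTdef, edgeSet_deleteEdges]
      refine ⟨q0.bypass.edges_subset_edgeSet he, ?_⟩
      simp only [Set.mem_singleton_iff]
      rintro rfl
      rw [← hdel_edge] at he
      exact hnotin (q0.bypass.fst_mem_support_of_mem_edges he)
    have := dist_le (q0.bypass.transfer T htrans)
    rw [Walk.length_transfer, hqb] at this
    exact this.trans hB
  -- data for the V-shape argument along the long arc
  have hmg : m ≤ g - 2 := by omega
  have hadjp : ∀ k, k + 1 ≤ g - 1 → T.Adj (cv hg0 c (a+k)) (cv hg0 c (a+(k+1))) := by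
    intro k hk
    rw [hTdef, deleteEdges_adj]
    constructor
    · have := cv_adj hg0 hcyc (a+k)
      rwa [show a + k + 1 = a + (k+1) by omega] at this
    · simp only [Set.mem_singleton_iff]
      have : s(cv hg0 c (a+k), cv hg0 c (a+(k+1))) = ce hg0 c (a+k) := by
        unfold ce; rw [show a + k + 1 = a + (k+1) by omega]
      rw [this, ce_eq_iff hinj hg3, show a + g - 1 = a + (g-1) by omega,
        mod_add_cancel hg0, Nat.mod_eq_of_lt (show k < g by omega),
        Nat.mod_eq_of_lt (by omega)]
      omega
  have hnep : ∀ k, k + 2 ≤ g - 1 → cv hg0 c (a+k) ≠ cv hg0 c (a+(k+2)) := by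
    intro k hk hcon
    rw [cv_eq_iff hinj, mod_add_cancel hg0, Nat.mod_eq_of_lt (show k < g by omega),
      Nat.mod_eq_of_lt (by omega)] at hcon
    omega
  have claim : ∀ k, k ≤ m → T.dist u (cv hg0 c (a+k)) + k = D := by
    intro k
    induction k with
    | zero => intro _; simpa using hTD
    | succ n ih =>
      intro hn
      have hprev := ih (by omega)
      rcases tree_adj_dist hTtree u (hadjp n (by omega)) with hup | hdown
      · exfalso
        have hray := tree_ray hTtree u (fun k => cv hg0 c (a+k)) (g-1)
          hadjp hnep (j := n) (by omega) hup (g - 1 - n) (by omega)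
        rw [show n + (g - 1 - n) = g - 1 by omega] at hray
        have hlast : T.dist u (cv hg0 c (a + (g-1))) ≤ D := by
          rwa [show a + (g-1) = a + g - 1 by omega]
        omega
      · rw [hdown] at hprev
        omega
  have hfin := claim m (le_refl m)
  have := hGle (cv hg0 c (a+m))
  omega

-- part6
include hcyc in
lemma lemmaM [DecidableRel G.Adj] (hconn : G.Connected)
    (hunicyclic : G.edgeFinset.card = Fintype.card V)
    (hinj : Function.Injective c) {m : ℕ} (hgm : g = 2*m) (hg3 : 3 ≤ g)
    {a : ℕ} (hdeg : G.degree (cv hg0 c a) = 2) {u : V}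
    (hA : G.dist u (cv hg0 c (a + 1)) ≤ G.dist u (cv hg0 c a))
    (hB : G.dist u (cv hg0 c (a + g - 1)) ≤ G.dist u (cv hg0 c a)) :
    G.dist u (cv hg0 c (a + m)) + m ≤ G.dist u (cv hg0 c a) := by
  have hm2 : 2 ≤ m := by omega
  have hune : u ≠ cv hg0 c a := by
    rintro rfl
    have h0 : G.dist (cv hg0 c a) (cv hg0 c a) = 0 := G.dist_self
    have hz : G.dist (cv hg0 c a) (cv hg0 c (a+1)) = 0 := by omega
    have := (hconn.dist_eq_zero_iff).1 hz
    rw [cv_eq_iff hinj] at this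
    have h1 : (a + 0) % g = (a + 1) % g := by simpa using this
    rw [mod_add_cancel hg0, Nat.zero_mod, Nat.mod_eq_of_lt (by omega)] at h1
    omega
  have hdel_edge : s(cv hg0 c a, cv hg0 c (a + g - 1)) = ce hg0 c (a + g - 1) := by
    unfold ce
    rw [show a + g - 1 + 1 = a + g by omega, cv_add_g, Sym2.eq_swap]
  have hcece : ce hg0 c a ≠ ce hg0 c (a + g - 1) := by
    intro hcon
    rw [ce_eq_iff hinj hg3, show a + g - 1 = a + (g - 1) by omega] at hcon
    have : (a + 0) % g = (a + (g-1)) % g := by simpa using hcon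
    rw [mod_add_cancel hg0, Nat.zero_mod, Nat.mod_eq_of_lt (by omega)] at this
    omega
  obtain ⟨w, q, hwadj, hwnot, hwlen⟩ := exists_penultimate hconn hune
  rcases neighbors_of_deg2 hg0 c hcyc hinj hg3 hdeg hwadj with hw | hw
  · -- came in via cv (a+1): use lemmaDir directly
    subst hw
    have htrans : ∀ e ∈ q.edges, e ∈ (G.deleteEdges {ce hg0 c (a + g - 1)}).edgeSet := by
      intro e he
      rw [edgeSet_deleteEdges]
      refine ⟨q.edges_subset_edgeSet he, ?_⟩
      simp only [Set.mem_singleton_iff]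
      rintro rfl
      rw [← hdel_edge] at he
      exact hwnot (q.fst_mem_support_of_mem_edges he)
    have hTadj : (G.deleteEdges {ce hg0 c (a + g - 1)}).Adj (cv hg0 c (a+1)) (cv hg0 c a) := by
      rw [deleteEdges_adj]
      refine ⟨(cv_adj hg0 hcyc a).symm, ?_⟩
      simp only [Set.mem_singleton_iff]
      rw [Sym2.eq_swap]
      exact fun hcon => hcece hcon
    have hT : (G.deleteEdges {ce hg0 c (a + g - 1)}).dist u (cv hg0 c a) ≤
        G.dist u (cv hg0 c a) := by
      have := dist_le ((q.transfer _ htrans).concat hTadj)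
      rw [Walk.length_concat, Walk.length_transfer, hwlen] at this
      exact this
    exact lemmaDir hg0 c hcyc hconn hunicyclic hinj hgm hg3 hdeg hB hT
  · -- came in via cv (a+g-1): apply lemmaDir to the reversed cycle
    subst hw
    set c' : Fin g → V := fun k => cv hg0 c (a + g - k.val) with hc'
    have hc'v : ∀ x : ℕ, cv hg0 c' x = cv hg0 c (a + g - x % g) := fun x => rfl
    have hinj' : Function.Injective c' := by
      intro k l hkl
      rw [hc'] at hkl
      simp only at hkl
      rw [cv_eq_iff hinj] at hkl
      apply Fin.ext
      have hk2 := k.2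
      have hl2 := l.2
      have hAk : (a + g - k.val) + k.val = (a + g - l.val) + l.val := by omega
      have h1 : Nat.ModEq g ((a + g - k.val) + k.val) ((a + g - l.val) + k.val) :=
        Nat.ModEq.add_right k.val hkl
      rw [hAk] at h1
      have h2 : Nat.ModEq g l.val k.val :=
        Nat.ModEq.add_left_cancel (Nat.ModEq.refl _) h1
      have h3 : l.val % g = k.val % g := h2
      rw [Nat.mod_eq_of_lt hl2, Nat.mod_eq_of_lt hk2] at h3
      omega
    have hcyc' : ∀ k : Fin g, G.Adj (c' k) (c' ⟨(k.val + 1) % g, Nat.mod_lt _ hg0⟩) := by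
      intro k
      rcases Nat.lt_or_ge k.val (g-1) with hk | hk
      · have he1 : ((k.val + 1) % g) = k.val + 1 := Nat.mod_eq_of_lt (by omega)
        rw [hc']
        simp only [he1]
        have := (cv_adj hg0 hcyc (a + g - k.val - 1)).symm
        rw [show a + g - k.val - 1 + 1 = a + g - k.val by omega] at this
        rw [show a + g - (k.val + 1) = a + g - k.val - 1 by omega]
        exact this
      · have hkval : k.val = g - 1 := by have := k.2; omega
        have he1 : ((k.val + 1) % g) = 0 := by
          rw [hkval, show g - 1 + 1 = g by omega, Nat.mod_self]
        rw [hc']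
        simp only [hkval]
        rw [show (g - 1 + 1) % g = 0 by rw [show g - 1 + 1 = g by omega, Nat.mod_self],
          Nat.sub_zero, show a + g - (g-1) = a + 1 by omega]
        have := (cv_adj hg0 hcyc a).symm
        rwa [← cv_add_g (hg0 := hg0) (c := c) a] at this
    -- identifications
    have e0 : cv hg0 c' 0 = cv hg0 c a := by
      rw [hc'v, Nat.zero_mod, Nat.sub_zero, cv_add_g]
    have e1 : cv hg0 c' (0 + 1) = cv hg0 c (a + g - 1) := by
      rw [hc'v]
      congr 1
      rw [Nat.zero_add, Nat.mod_eq_of_lt (by omega)]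
    have e2 : cv hg0 c' (0 + g - 1) = cv hg0 c (a + 1) := by
      rw [hc'v]
      congr 1
      rw [Nat.zero_add, Nat.mod_eq_of_lt (by omega)]
      omega
    have e3 : cv hg0 c' (0 + m) = cv hg0 c (a + m) := by
      rw [hc'v]
      congr 1
      rw [Nat.zero_add, Nat.mod_eq_of_lt (by omega)]
      omega
    have e4 : ce hg0 c' (0 + g - 1) = ce hg0 c a := by
      unfold ce
      rw [show 0 + g - 1 + 1 = 0 + g by omega]
      rw [hc'v, hc'v]
      rw [show (0 + g - 1) % g = g - 1 by rw [Nat.zero_add]; exact Nat.mod_eq_of_lt (by omega),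
        show (0 + g) % g = 0 by rw [Nat.zero_add]; exact Nat.mod_self g]
      rw [show a + g - (g-1) = a + 1 by omega, Nat.sub_zero, cv_add_g, Sym2.eq_swap]
    have hdeg' : G.degree (cv hg0 c' 0) = 2 := by rw [e0]; exact hdeg
    have hB' : G.dist u (cv hg0 c' (0 + g - 1)) ≤ G.dist u (cv hg0 c' 0) := by
      rw [e0, e2]; exact hA
    have hT' : (G.deleteEdges {ce hg0 c' (0 + g - 1)}).dist u (cv hg0 c' 0) ≤
        G.dist u (cv hg0 c' 0) := by
      rw [e0, e4]
      have htrans : ∀ e ∈ q.edges, e ∈ (G.deleteEdges {ce hg0 c a}).edgeSet := by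
        intro e he
        rw [edgeSet_deleteEdges]
        refine ⟨q.edges_subset_edgeSet he, ?_⟩
        simp only [Set.mem_singleton_iff]
        rintro rfl
        exact hwnot (q.fst_mem_support_of_mem_edges he)
      have hTadj : (G.deleteEdges {ce hg0 c a}).Adj (cv hg0 c (a + g - 1)) (cv hg0 c a) := by
        rw [deleteEdges_adj]
        refine ⟨hwadj.symm, ?_⟩
        simp only [Set.mem_singleton_iff]
        rw [Sym2.eq_swap, hdel_edge]
        exact fun hcon => hcece hcon.symm
      have := dist_le ((q.transfer _ htrans).concat hTadj)
      rw [Walk.length_concat, Walk.length_transfer, hwlen] at this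
      exact this
    have := lemmaDir hg0 c' hcyc' hconn hunicyclic hinj' hgm hg3 (a := 0) hdeg' hB' hT'
    rw [e0, e3] at this
    exact this

end Cyc
end Stmt18Aux


open SimpleGraph

theorem stmt18 {V : Type*} [Fintype V] [DecidableEq V] (G : SimpleGraph V)
    [DecidableRel G.Adj] (hconn : G.Connected)
    (hunicyclic : G.edgeFinset.card = Fintype.card V)
    (g m : ℕ) (hgm : g = 2 * m) (hg3 : 3 ≤ g)
    (c : Fin g → V) (hinj : Function.Injective c)
    (hcyc : ∀ i : Fin g, G.Adj (c i) (c ⟨(i.val + 1) % g, Nat.mod_lt _ (by omega)⟩))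
    (i : Fin g)
    (hdi : G.degree (c i) = 2)
    (hdi' : G.degree (c ⟨(i.val + m) % g, Nat.mod_lt _ (by omega)⟩) = 2) :
    mmd G (c i) (c ⟨(i.val + m) % g, Nat.mod_lt _ (by omega)⟩) ∧
    ∀ u : V, u ≠ c i → u ≠ c ⟨(i.val + m) % g, Nat.mod_lt _ (by omega)⟩ →
      ¬ mmd G (c i) u ∧ ¬ mmd G (c ⟨(i.val + m) % g, Nat.mod_lt _ (by omega)⟩) u := by
  have hg0 : 0 < g := by omega
  have hm2 : 2 ≤ m := by omega
  open Stmt18Aux in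
  set a := i.val with ha
  have hci : c i = cv hg0 c a := by
    unfold Stmt18Aux.cv
    congr 1
    exact Fin.ext (Nat.mod_eq_of_lt i.2).symm
  have hcim : c ⟨(i.val + m) % g, Nat.mod_lt _ (by omega)⟩ = cv hg0 c (a + m) := rfl
  -- distance facts
  have dant : G.dist (cv hg0 c a) (cv hg0 c (a+m)) = m :=
    dist_antipodal hg0 c hcyc hconn hunicyclic hinj hgm hg3 a
  have d1 : G.dist (cv hg0 c (a+1)) (cv hg0 c (a+m)) ≤ m - 1 := by
    have := dist_cv_le hg0 c hcyc (a+1) (m-1)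
    rwa [show a+1+(m-1) = a+m by omega] at this
  have d2 : G.dist (cv hg0 c (a+m)) (cv hg0 c (a+g-1)) ≤ m - 1 := by
    have := dist_cv_le hg0 c hcyc (a+m) (m-1)
    rwa [show a+m+(m-1) = a+g-1 by omega] at this
  have d3 : G.dist (cv hg0 c (a+m+1)) (cv hg0 c a) ≤ m - 1 := by
    have := dist_cv_le hg0 c hcyc (a+m+1) (m-1)
    rwa [show a+m+1+(m-1) = a+g by omega, cv_add_g] at this
  have e5 : cv hg0 c (a+m+g-1) = cv hg0 c (a+m-1) := by
    rw [show a+m+g-1 = (a+m-1)+g by omega, cv_add_g]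
  have d4 : G.dist (cv hg0 c a) (cv hg0 c (a+m-1)) ≤ m - 1 := by
    have := dist_cv_le hg0 c hcyc a (m-1)
    rwa [show a+(m-1) = a+m-1 by omega] at this
  -- adjacencies
  have adjA : G.Adj (cv hg0 c a) (cv hg0 c (a+1)) := cv_adj hg0 hcyc a
  have adjB : G.Adj (cv hg0 c a) (cv hg0 c (a+g-1)) := by
    have := cv_adj hg0 hcyc (a+g-1)
    rw [show a+g-1+1 = a+g by omega, cv_add_g] at this
    exact this.symm
  have adjA' : G.Adj (cv hg0 c (a+m)) (cv hg0 c (a+m+1)) := cv_adj hg0 hcyc (a+m)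
  have adjB' : G.Adj (cv hg0 c (a+m)) (cv hg0 c (a+m+g-1)) := by
    have := cv_adj hg0 hcyc (a+m+g-1)
    rw [show a+m+g-1+1 = (a+m)+g by omega, cv_add_g] at this
    exact this.symm
  -- degrees
  have hdegA : G.degree (cv hg0 c a) = 2 := by rw [← hci]; exact hdi
  have hdegB : G.degree (cv hg0 c (a+m)) = 2 := by rw [← hcim]; exact hdi'
  constructor
  · -- mmd
    constructor
    · -- maxDistantFrom G (c i) (antipode)
      intro w hw
      rw [hci] at hw
      rw [hcim, hci]
      rcases neighbors_of_deg2 hg0 c hcyc hinj hg3 hdegA hw with rfl | rfl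
      · have t1 := G.dist_comm (u := cv hg0 c (a+m)) (v := cv hg0 c (a+1))
        have t2 := G.dist_comm (u := cv hg0 c (a+m)) (v := cv hg0 c a)
        omega
      · have t2 := G.dist_comm (u := cv hg0 c (a+m)) (v := cv hg0 c a)
        omega
    · -- maxDistantFrom G (antipode) (c i)
      intro w hw
      rw [hcim] at hw
      rw [hcim, hci]
      rcases neighbors_of_deg2 hg0 c hcyc hinj hg3 hdegB hw with rfl | rfl
      · have t1 := G.dist_comm (u := cv hg0 c a) (v := cv hg0 c (a+m+1))
        omega
      · rw [e5]
        omega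
  · intro u hu1 hu2
    rw [hci] at hu1
    rw [hcim] at hu2
    constructor
    · rintro ⟨h1, -⟩
      have hA := h1 (cv hg0 c (a+1)) (by rw [hci]; exact adjA)
      have hB := h1 (cv hg0 c (a+g-1)) (by rw [hci]; exact adjB)
      rw [hci] at hA hB
      have hM := lemmaM hg0 c hcyc hconn hunicyclic hinj hgm hg3 hdegA hA hB
      obtain ⟨w, hwadj, hwd⟩ := exists_penultimate_dist hconn hu2
      rcases neighbors_of_deg2 hg0 c hcyc hinj hg3 hdegB hwadj with rfl | rfl
      · have tri := hconn.dist_triangle (u := u) (v := cv hg0 c (a+m+1)) (w := cv hg0 c a)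
        omega
      · have tri := hconn.dist_triangle (u := u) (v := cv hg0 c (a+m+g-1)) (w := cv hg0 c a)
        rw [e5] at tri
        have t1 := G.dist_comm (u := cv hg0 c a) (v := cv hg0 c (a+m-1))
        have t2 : G.dist u (cv hg0 c (a+m+g-1)) = G.dist u (cv hg0 c (a+m-1)) := by rw [e5]
        omega
    · rintro ⟨h1, -⟩
      have hA := h1 (cv hg0 c (a+m+1)) (by rw [hcim]; exact adjA')
      have hB := h1 (cv hg0 c (a+m+g-1)) (by rw [hcim]; exact adjB')
      rw [hcim] at hA hB
      have hM := lemmaM hg0 c hcyc hconn hunicyclic hinj hgm hg3 (a := a+m) hdegB hA hB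
      rw [show a+m+m = a+g by omega, cv_add_g] at hM
      obtain ⟨w, hwadj, hwd⟩ := exists_penultimate_dist hconn hu1
      rcases neighbors_of_deg2 hg0 c hcyc hinj hg3 hdegA hwadj with rfl | rfl
      · have tri := hconn.dist_triangle (u := u) (v := cv hg0 c (a+1)) (w := cv hg0 c (a+m))
        omega
      · have tri := hconn.dist_triangle (u := u) (v := cv hg0 c (a+g-1)) (w := cv hg0 c (a+m))
        have t1 := G.dist_comm (u := cv hg0 c (a+m)) (v := cv hg0 c (a+g-1))
        omega
end
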